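/- arXiv:1904.02114 — 6 statements merged into one kernel-verified Lean document; each statement's English description precedes it below -/
import Mathlib

section
/- Let (V, g) be a finite-dimensional real vector space equipped with a symmetric bilinear form g. Then there exists an ℝ-bilinear bracket {·,·} on the exterior algebra ΛV such that (a) {1, a} = 0 for all a ∈ ΛV; (b) {x, y} = g(x, y)·1 for all x, y ∈ V; (c) {x, y∧z} = {x,y}·z − {x,z}·y for all x, y, z ∈ V; and this bracket makes ΛV into a graded Poisson algebra of degree −2, i.e. it satisfies axioms (i)–(iv) of a graded Poisson algebra with k = −2. -/
open ExteriorAlgebra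

/-- The standard ℤ-grading of the exterior algebra `ΛV` (supported in
non-negative degrees), with `V` in degree `1`. -/
noncomputable def extGrade (V : Type) [AddCommGroup V] [Module ℝ V] (n : ℕ) :
    Submodule ℝ (ExteriorAlgebra ℝ V) :=
  LinearMap.range (ExteriorAlgebra.ι ℝ : V →ₗ[ℝ] ExteriorAlgebra ℝ V) ^ n

section Aux
open CliffordAlgebra
variable {V : Type} [AddCommGroup V] [Module ℝ V]

noncomputable abbrev ctr (φ : Module.Dual ℝ V) :
    ExteriorAlgebra ℝ V →ₗ[ℝ] ExteriorAlgebra ℝ V :=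
  contractLeft (Q := (0 : QuadraticForm ℝ V)) φ

lemma ctr_prod (φ : Module.Dual ℝ V) (u v : ExteriorAlgebra ℝ V) :
    ctr φ (u * v) = ctr φ u * v + involute u * ctr φ v := by
  induction u using CliffordAlgebra.left_induction with
  | algebraMap r =>
      simp [contractLeft_algebraMap_mul, contractLeft_algebraMap]
  | add x y hx hy =>
      simp only [add_mul, map_add, hx, hy]
      abel
  | ι_mul x m hx =>
      rw [mul_assoc, contractLeft_ι_mul, hx, contractLeft_ι_mul, map_mul, involute_ι]
      simp only [mul_add, sub_mul, smul_mul_assoc, neg_mul, mul_assoc]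
      abel

lemma ctr_involute (φ : Module.Dual ℝ V) (u : ExteriorAlgebra ℝ V) :
    ctr φ (involute u) = - involute (ctr φ u) := by
  induction u using CliffordAlgebra.left_induction with
  | algebraMap r => simp [contractLeft_algebraMap]
  | add x y hx hy => simp only [map_add, hx, hy]; abel
  | ι_mul x m hx =>
      rw [map_mul, involute_ι, neg_mul, map_neg, contractLeft_ι_mul, hx,
        contractLeft_ι_mul, map_sub, map_smul, map_mul, involute_ι]
      simp only [neg_sub, neg_mul, mul_neg, sub_eq_add_neg, neg_neg]

lemma ctr_ctr (φ ψ : Module.Dual ℝ V) (u : ExteriorAlgebra ℝ V) :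
    ctr φ (ctr ψ u) = - ctr ψ (ctr φ u) := by
  have h := contractLeft_contractLeft (d := φ + ψ) (x := u)
  simp only [map_add, LinearMap.add_apply, contractLeft_contractLeft] at h
  have h2 : ctr φ (ctr ψ u) + ctr ψ (ctr φ u) = 0 := by
    have := h; abel_nf at this ⊢; linear_combination (norm := abel) this
  exact eq_neg_of_add_eq_zero_left h2

lemma extGrade_succ (n : ℕ) :
    extGrade V (n+1) =
      LinearMap.range (ExteriorAlgebra.ι ℝ : V →ₗ[ℝ] ExteriorAlgebra ℝ V) * extGrade V n := by
  simp only [extGrade]; rw [pow_succ']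

lemma mem_extGrade_zero {u : ExteriorAlgebra ℝ V} (hu : u ∈ extGrade V 0) :
    ∃ r : ℝ, algebraMap ℝ _ r = u := by
  simp only [extGrade, pow_zero] at hu
  exact Submodule.mem_one.mp hu

lemma one_mem_extGrade : (1 : ExteriorAlgebra ℝ V) ∈ extGrade V 0 := by
  simp only [extGrade, pow_zero]
  exact Submodule.mem_one.mpr ⟨1, map_one _⟩

lemma algebraMap_mem_extGrade (r : ℝ) : algebraMap ℝ (ExteriorAlgebra ℝ V) r ∈ extGrade V 0 := by
  simp only [extGrade, pow_zero]
  exact Submodule.mem_one.mpr ⟨r, rfl⟩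

lemma ι_mem_extGrade (x : V) : ExteriorAlgebra.ι ℝ x ∈ extGrade V 1 := by
  simp only [extGrade, pow_one]
  exact ⟨x, rfl⟩

lemma mul_mem_extGrade {m n : ℕ} {u v : ExteriorAlgebra ℝ V}
    (hu : u ∈ extGrade V m) (hv : v ∈ extGrade V n) : u * v ∈ extGrade V (m+n) := by
  simp only [extGrade, pow_add] at *
  exact Submodule.mul_mem_mul hu hv

lemma ctr_grade_zero (φ : Module.Dual ℝ V) {u : ExteriorAlgebra ℝ V}
    (hu : u ∈ extGrade V 0) : ctr φ u = 0 := by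
  obtain ⟨r, rfl⟩ := mem_extGrade_zero hu
  simp

lemma ctr_mem (φ : Module.Dual ℝ V) :
    ∀ (n : ℕ) (u : ExteriorAlgebra ℝ V), u ∈ extGrade V (n+1) → ctr φ u ∈ extGrade V n := by
  intro n
  induction n with
  | zero =>
      intro u hu
      rw [extGrade_succ] at hu
      refine Submodule.mul_induction_on hu ?_ (fun x y hx hy => by
        rw [map_add]; exact add_mem hx hy)
      rintro _ ⟨x, rfl⟩ w hw
      obtain ⟨r, rfl⟩ := mem_extGrade_zero hw
      rw [show contractLeft φ (ExteriorAlgebra.ι ℝ x * algebraMap ℝ _ r)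
          = contractLeft φ (ExteriorAlgebra.ι ℝ x) * algebraMap ℝ _ r from
          contractLeft_mul_algebraMap _ _ _, contractLeft_ι]
      rw [← map_mul]
      exact algebraMap_mem_extGrade _
  | succ m ih =>
      intro u hu
      rw [extGrade_succ] at hu
      refine Submodule.mul_induction_on hu ?_ (fun x y hx hy => by
        rw [map_add]; exact add_mem hx hy)
      rintro _ ⟨x, rfl⟩ w hw
      rw [show (ctr φ) (ExteriorAlgebra.ι ℝ x * w) = φ x • w - ExteriorAlgebra.ι ℝ x * ctr φ w
          from contractLeft_ι_mul _ _ _]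
      refine sub_mem (Submodule.smul_mem _ _ hw) ?_
      have := mul_mem_extGrade (ι_mem_extGrade x) (ih w hw)
      simpa [Nat.add_comm] using this

lemma ι_anticomm (x y : V) :
    ExteriorAlgebra.ι ℝ y * ExteriorAlgebra.ι ℝ x
      = - (ExteriorAlgebra.ι ℝ x * ExteriorAlgebra.ι ℝ y) := by
  have h := ExteriorAlgebra.ι_add_mul_swap (R := ℝ) x y
  linear_combination (norm := abel) h

lemma mul_ι_comm :
    ∀ (n : ℕ) (v : ExteriorAlgebra ℝ V), v ∈ extGrade V n → ∀ x : V,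
      v * ExteriorAlgebra.ι ℝ x = ((-1:ℝ)^n) • (ExteriorAlgebra.ι ℝ x * v) := by
  intro n
  induction n with
  | zero =>
      intro v hv x
      obtain ⟨r, rfl⟩ := mem_extGrade_zero hv
      rw [Algebra.commutes]
      simp
  | succ m ih =>
      intro v hv x
      rw [extGrade_succ] at hv
      refine Submodule.mul_induction_on hv ?_ (fun a b ha hb => by
        rw [add_mul, ha, hb, mul_add, smul_add])
      rintro _ ⟨y, rfl⟩ w hw
      rw [mul_assoc, ih w hw x, mul_smul_comm, ← mul_assoc, ι_anticomm, neg_mul, mul_assoc,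
        pow_succ, mul_smul, neg_one_smul, smul_neg]

lemma ι_mul_comm {n : ℕ} {v : ExteriorAlgebra ℝ V} (hv : v ∈ extGrade V n) (x : V) :
    ExteriorAlgebra.ι ℝ x * v = ((-1:ℝ)^n) • (v * ExteriorAlgebra.ι ℝ x) := by
  rw [mul_ι_comm n v hv x, smul_smul, ← pow_add]
  rw [Even.neg_one_pow ⟨n, two_mul n ▸ rfl⟩, one_smul]

lemma grade_comm :
    ∀ (m : ℕ) (u : ExteriorAlgebra ℝ V), u ∈ extGrade V m →
    ∀ (n : ℕ) (v : ExteriorAlgebra ℝ V), v ∈ extGrade V n →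
      u * v = ((-1:ℝ)^(m*n)) • (v * u) := by
  intro m
  induction m with
  | zero =>
      intro u hu n v hv
      obtain ⟨r, rfl⟩ := mem_extGrade_zero hu
      rw [Algebra.commutes]
      simp
  | succ p ih =>
      intro u hu n v hv
      rw [extGrade_succ] at hu
      refine Submodule.mul_induction_on hu ?_ (fun a b ha hb => by
        rw [add_mul, ha, hb, mul_add, smul_add])
      rintro _ ⟨y, rfl⟩ w hw
      rw [mul_assoc, ih w hw n v hv, mul_smul_comm, ← mul_assoc, ι_mul_comm hv y, smul_mul_assoc,
        smul_smul, mul_assoc, ← pow_add]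
      congr 2
      ring

lemma involute_grade :
    ∀ (n : ℕ) (u : ExteriorAlgebra ℝ V), u ∈ extGrade V n →
      involute u = ((-1:ℝ)^n) • u := by
  intro n
  induction n with
  | zero =>
      intro u hu
      obtain ⟨r, rfl⟩ := mem_extGrade_zero hu
      simp
  | succ p ih =>
      intro u hu
      rw [extGrade_succ] at hu
      refine Submodule.mul_induction_on hu ?_ (fun a b ha hb => by
        rw [map_add, ha, hb, smul_add])
      rintro _ ⟨y, rfl⟩ w hw
      rw [map_mul, involute_ι, ih w hw, pow_succ, mul_smul, neg_one_smul, mul_smul_comm, neg_mul,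
        smul_neg]

lemma involute_mem {n : ℕ} {u : ExteriorAlgebra ℝ V} (hu : u ∈ extGrade V n) :
    involute u ∈ extGrade V n := by
  rw [involute_grade n u hu]
  exact Submodule.smul_mem _ _ hu

section Bracket
variable (g : LinearMap.BilinForm ℝ V) {k : ℕ} (b : Module.Basis (Fin k) ℝ V)

noncomputable def brk : ExteriorAlgebra ℝ V →ₗ[ℝ] ExteriorAlgebra ℝ V →ₗ[ℝ] ExteriorAlgebra ℝ V :=
  LinearMap.mk₂ ℝ (fun f h => ∑ i, ∑ j, g (b i) (b j) •
      (involute (ctr (b.coord i) f) * ctr (b.coord j) h))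
    (fun f f' h => by
      simp only [map_add, add_mul, smul_add, Finset.sum_add_distrib])
    (fun c f h => by
      simp only [map_smul, smul_mul_assoc, ← Finset.smul_sum, smul_comm _ c])
    (fun f h h' => by
      simp only [map_add, mul_add, smul_add, Finset.sum_add_distrib])
    (fun c f h => by
      simp only [map_smul, mul_smul_comm, ← Finset.smul_sum, smul_comm _ c])

lemma brk_apply (f h : ExteriorAlgebra ℝ V) :
    brk g b f h = ∑ i, ∑ j, g (b i) (b j) •
      (involute (ctr (b.coord i) f) * ctr (b.coord j) h) :=
  rfl

lemma br_zero_left {f : ExteriorAlgebra ℝ V} (hf : f ∈ extGrade V 0)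
    (h : ExteriorAlgebra ℝ V) : brk g b f h = 0 := by
  simp [brk_apply, ctr_grade_zero _ hf]

lemma br_zero_right {h : ExteriorAlgebra ℝ V} (hh : h ∈ extGrade V 0)
    (f : ExteriorAlgebra ℝ V) : brk g b f h = 0 := by
  simp [brk_apply, ctr_grade_zero _ hh]

lemma br_mem {p q : ℕ} {f h : ExteriorAlgebra ℝ V}
    (hf : f ∈ extGrade V (p+1)) (hh : h ∈ extGrade V (q+1)) :
    brk g b f h ∈ extGrade V (p+q) := by
  rw [brk_apply]
  refine Submodule.sum_mem _ fun i _ => Submodule.sum_mem _ fun j _ =>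
    Submodule.smul_mem _ _ ?_
  exact mul_mem_extGrade (involute_mem (ctr_mem _ p f hf)) (ctr_mem _ q h hh)

lemma br_star (φ : Module.Dual ℝ V) (u v : ExteriorAlgebra ℝ V) :
    ctr φ (brk g b u v) =
      brk g b (ctr φ u) v + brk g b (involute u) (ctr φ v) := by
  simp only [brk_apply, map_sum, map_smul, ← Finset.sum_add_distrib, ← smul_add]
  refine Finset.sum_congr rfl fun i _ => Finset.sum_congr rfl fun j _ => ?_
  congr 1
  rw [ctr_prod, involute_involute]
  congr 1
  · rw [ctr_involute, ctr_ctr, map_neg, neg_neg]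
  · rw [ctr_involute, map_neg, involute_involute, ctr_ctr, neg_mul, mul_neg]

lemma br_diamond (x : V) (w h : ExteriorAlgebra ℝ V) :
    brk g b (ExteriorAlgebra.ι ℝ x * w) h =
      involute w * ctr (g x) h + ExteriorAlgebra.ι ℝ x * brk g b w h := by
  have claim1 : ∀ j, (∑ i, g (b i) (b j) * b.coord i x) = g x (b j) := by
    intro j
    conv_rhs => rw [← b.sum_repr x]
    rw [map_sum, LinearMap.sum_apply]
    refine Finset.sum_congr rfl fun i _ => ?_
    rw [map_smul, LinearMap.smul_apply, smul_eq_mul, Module.Basis.coord_apply, mul_comm]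
  have claim2 : (∑ j, g x (b j) • ctr (b.coord j) h) = ctr (g x) h := by
    rw [show (∑ j, g x (b j) • ctr (b.coord j) h)
        = ctr (∑ j, g x (b j) • b.coord j) h by
      simp only [map_sum, map_smul, LinearMap.sum_apply, LinearMap.smul_apply]]
    rw [b.sum_dual_apply_smul_coord (g x)]
  rw [brk_apply]
  have expand : ∀ i j, g (b i) (b j) •
      (involute (ctr (b.coord i) (ExteriorAlgebra.ι ℝ x * w)) * ctr (b.coord j) h)
      = (g (b i) (b j) * b.coord i x) • (involute w * ctr (b.coord j) h)
        + ExteriorAlgebra.ι ℝ x *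
          (g (b i) (b j) • (involute (ctr (b.coord i) w) * ctr (b.coord j) h)) := by
    intro i j
    rw [show ctr (b.coord i) (ExteriorAlgebra.ι ℝ x * w)
        = b.coord i x • w - ExteriorAlgebra.ι ℝ x * ctr (b.coord i) w from
        contractLeft_ι_mul _ _ _]
    rw [map_sub, map_smul, map_mul, involute_ι, sub_mul, smul_mul_assoc, neg_mul, neg_mul,
      sub_neg_eq_add, smul_add, mul_smul_comm, smul_smul, mul_assoc]
  simp only [expand, Finset.sum_add_distrib, ← Finset.mul_sum]
  congr 1
  rw [Finset.sum_comm]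
  simp only [← Finset.sum_smul, claim1]
  rw [← claim2, Finset.mul_sum]
  exact Finset.sum_congr rfl fun j _ => (mul_smul_comm _ _ _).symm

lemma br_one_left (h : ExteriorAlgebra ℝ V) : brk g b 1 h = 0 :=
  br_zero_left g b one_mem_extGrade h

lemma br_keyop (x : V) (h : ExteriorAlgebra ℝ V) :
    brk g b (ExteriorAlgebra.ι ℝ x) h = ctr (g x) h := by
  have := br_diamond g b x 1 h
  simpa [br_one_left] using this

lemma br_skew_core (hg : ∀ x y : V, g x y = g y x) {p q : ℕ} {f f' : ExteriorAlgebra ℝ V}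
    (hf : f ∈ extGrade V (p+1)) (hf' : f' ∈ extGrade V (q+1)) :
    brk g b f f' = -((-1:ℝ)^((p+1)*(q+1))) • brk g b f' f := by
  set S : ExteriorAlgebra ℝ V :=
    ∑ i, ∑ j, g (b i) (b j) • (ctr (b.coord i) f * ctr (b.coord j) f') with hS
  have h1 : brk g b f f' = ((-1:ℝ)^p) • S := by
    rw [brk_apply, hS, Finset.smul_sum]
    refine Finset.sum_congr rfl fun i _ => ?_
    rw [Finset.smul_sum]
    refine Finset.sum_congr rfl fun j _ => ?_
    rw [involute_grade p _ (ctr_mem _ p f hf), smul_mul_assoc, smul_comm]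
  have h2 : brk g b f' f = ((-1:ℝ)^(q+q*p)) • S := by
    have step : brk g b f' f
        = ∑ i, ∑ j, g (b i) (b j) • (((-1:ℝ)^(q+q*p)) • (ctr (b.coord j) f * ctr (b.coord i) f')) := by
      rw [brk_apply]
      refine Finset.sum_congr rfl fun i _ => Finset.sum_congr rfl fun j _ => ?_
      rw [involute_grade q _ (ctr_mem _ q f' hf'), smul_mul_assoc,
        grade_comm q _ (ctr_mem _ q f' hf') p _ (ctr_mem _ p f hf), smul_smul, smul_smul,
        smul_smul]
      congr 1
      rw [pow_add]
      ring
    rw [step]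
    have step2 : ∀ (i j : Fin k), g (b i) (b j) • (((-1:ℝ)^(q+q*p)) • (ctr (b.coord j) f * ctr (b.coord i) f'))
        = ((-1:ℝ)^(q+q*p)) • (g (b i) (b j) • (ctr (b.coord j) f * ctr (b.coord i) f')) :=
      fun i j => smul_comm _ _ _
    simp only [step2, ← Finset.smul_sum]
    congr 1
    rw [hS, Finset.sum_comm]
    refine Finset.sum_congr rfl fun i _ => Finset.sum_congr rfl fun j _ => ?_
    rw [hg (b j) (b i)]
  rw [h1, h2, smul_smul]
  congr 1
  rw [neg_mul, ← pow_add]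
  have e : (p+1)*(q+1) + (q+q*p) = 2*(p*q+q) + (p+1) := by ring
  rw [e, pow_add, pow_mul, neg_one_sq, one_pow, one_mul, pow_succ]
  ring

lemma br_skew (hg : ∀ x y : V, g x y = g y x) {m n : ℕ} {f f' : ExteriorAlgebra ℝ V}
    (hf : f ∈ extGrade V m) (hf' : f' ∈ extGrade V n) :
    brk g b f f' = -((-1:ℝ)^(m*n)) • brk g b f' f := by
  match m, n with
  | 0, n => simp [br_zero_left g b hf, br_zero_right g b hf]
  | m+1, 0 => simp [br_zero_right g b hf', br_zero_left g b hf']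
  | p+1, q+1 => exact br_skew_core g b hg hf hf'

lemma aux_comm {p m : ℕ} {A u : ExteriorAlgebra ℝ V} (hA : A ∈ extGrade V p)
    (hu : u ∈ extGrade V m) (B : ExteriorAlgebra ℝ V) :
    involute A * (involute u * B) = ((-1:ℝ)^(p+m+p*m)) • (u * (A * B)) := by
  rw [involute_grade p A hA, involute_grade m u hu]
  simp only [smul_mul_assoc, mul_smul_comm, smul_smul]
  rw [← mul_assoc, grade_comm p A hA m u hu]
  simp only [smul_mul_assoc, smul_smul, mul_assoc]
  congr 1
  ring

lemma aux_comm2 {p n : ℕ} {A v : ExteriorAlgebra ℝ V} (hA : A ∈ extGrade V p)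
    (hv : v ∈ extGrade V n) (B : ExteriorAlgebra ℝ V) :
    (involute A * involute v) * B = ((-1:ℝ)^(n+p+p*n)) • (v * (A * B)) := by
  rw [involute_grade p A hA, involute_grade n v hv]
  simp only [smul_mul_assoc, mul_smul_comm, smul_smul]
  rw [grade_comm p A hA n v hv]
  simp only [smul_mul_assoc, smul_smul, mul_assoc]
  congr 1
  ring

lemma br_leib2 {a m : ℕ} {f u : ExteriorAlgebra ℝ V} (hf : f ∈ extGrade V a)
    (hu : u ∈ extGrade V m) (v : ExteriorAlgebra ℝ V) :
    brk g b f (u * v) = brk g b f u * v + ((-1:ℝ)^(a*m)) • (u * brk g b f v) := by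
  match a with
  | 0 => simp [br_zero_left g b hf]
  | p+1 =>
  have key : ∀ i j : Fin k, g (b i) (b j) •
      (involute (ctr (b.coord i) f) * ctr (b.coord j) (u * v))
      = g (b i) (b j) • (involute (ctr (b.coord i) f) * ctr (b.coord j) u * v)
        + ((-1:ℝ)^(p+m+p*m)) • (g (b i) (b j) •
            (u * (ctr (b.coord i) f * ctr (b.coord j) v))) := by
    intro i j
    rw [ctr_prod, mul_add, ← mul_assoc, smul_add, aux_comm (ctr_mem _ p f hf) hu, smul_comm]
  rw [brk_apply]
  simp only [key, Finset.sum_add_distrib]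
  congr 1
  · rw [brk_apply, Finset.sum_mul]
    exact Finset.sum_congr rfl fun i _ => by
      rw [Finset.sum_mul]
      exact Finset.sum_congr rfl fun j _ => by rw [smul_mul_assoc]
  · rw [brk_apply, Finset.mul_sum, Finset.smul_sum]
    refine Finset.sum_congr rfl fun i _ => ?_
    rw [Finset.mul_sum, Finset.smul_sum]
    refine Finset.sum_congr rfl fun j _ => ?_
    rw [involute_grade p _ (ctr_mem _ p f hf)]
    simp only [smul_mul_assoc, mul_smul_comm, smul_smul]
    congr 1
    ring

lemma br_leib1 {m n : ℕ} {u v : ExteriorAlgebra ℝ V} (hu : u ∈ extGrade V m)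
    (hv : v ∈ extGrade V n) (h : ExteriorAlgebra ℝ V) :
    brk g b (u * v) h = ((-1:ℝ)^(m*n)) • (v * brk g b u h) + u * brk g b v h := by
  match m with
  | 0 =>
    obtain ⟨r, rfl⟩ := mem_extGrade_zero hu
    rw [br_zero_left g b (algebraMap_mem_extGrade r), ← Algebra.smul_def, map_smul,
      LinearMap.smul_apply, mul_zero, smul_zero, zero_add, ← Algebra.smul_def]
  | p+1 =>
  have key : ∀ i j : Fin k, g (b i) (b j) •
      (involute (ctr (b.coord i) (u * v)) * ctr (b.coord j) h)
      = ((-1:ℝ)^(n+p+p*n)) • (g (b i) (b j) •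
            (v * (ctr (b.coord i) u * ctr (b.coord j) h)))
        + g (b i) (b j) • (u * (involute (ctr (b.coord i) v) * ctr (b.coord j) h)) := by
    intro i j
    rw [ctr_prod, map_add, map_mul, map_mul, involute_involute, add_mul, smul_add,
      aux_comm2 (ctr_mem _ p u hu) hv, mul_assoc, smul_comm]
  rw [brk_apply]
  simp only [key, Finset.sum_add_distrib]
  congr 1
  · rw [brk_apply, Finset.mul_sum, Finset.smul_sum]
    refine Finset.sum_congr rfl fun i _ => ?_
    rw [Finset.mul_sum, Finset.smul_sum]
    refine Finset.sum_congr rfl fun j _ => ?_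
    rw [involute_grade p _ (ctr_mem _ p u hu)]
    simp only [smul_mul_assoc, mul_smul_comm, smul_smul]
    congr 1
    ring
  · rw [brk_apply, Finset.mul_sum]
    refine Finset.sum_congr rfl fun i _ => ?_
    rw [Finset.mul_sum]
    exact Finset.sum_congr rfl fun j _ => by rw [mul_smul_comm]

lemma involute_br {m n : ℕ} {f h : ExteriorAlgebra ℝ V} (hf : f ∈ extGrade V m)
    (hh : h ∈ extGrade V n) :
    involute (brk g b f h) = ((-1:ℝ)^(m+n)) • brk g b f h := by
  match m, n with
  | 0, n => simp [br_zero_left g b hf]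
  | m+1, 0 => simp [br_zero_right g b hh]
  | p+1, q+1 =>
    rw [involute_grade (p+q) _ (br_mem g b hf hh)]
    congr 1
    ring

lemma neg_one_pow_ite (n : ℕ) : ((-1:ℝ))^n = if Even n then 1 else -1 := by
  rcases Nat.even_or_odd n with hn | hn
  · simp [hn, Even.neg_one_pow]
  · simp [Nat.not_even_iff_odd.mpr hn, Odd.neg_one_pow, hn]


lemma pow_neg_one_two_mul (E K : ℕ) : ((-1:ℝ))^E = (-1)^(E + 2*K) := by
  rw [pow_add, pow_mul, neg_one_sq, one_pow, mul_one]

lemma br_jacobi (hg : ∀ x y : V, g x y = g y x) :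
    ∀ (a : ℕ) (f : ExteriorAlgebra ℝ V), f ∈ extGrade V a →
    ∀ (c : ℕ) (f' : ExteriorAlgebra ℝ V), f' ∈ extGrade V c →
    ∀ h : ExteriorAlgebra ℝ V,
      brk g b f (brk g b f' h) =
        brk g b (brk g b f f') h + ((-1:ℝ)^(a*c)) • brk g b f' (brk g b f h) := by
  intro a
  induction a with
  | zero =>
      intro f hf c f' hf' h
      simp [br_zero_left g b hf, map_zero]
  | succ p ih =>
      intro f hf c f' hf' h
      rw [extGrade_succ] at hf
      refine Submodule.mul_induction_on hf ?_ ?_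
      · rintro _ ⟨x, rfl⟩ w hw
        match c, hf' with
        | 0, hf' =>
            simp [br_zero_left g b hf', br_zero_right g b hf', map_zero]
        | q+1, hf' =>
          have hq : ctr (g x) f' ∈ extGrade V q := ctr_mem _ q f' hf'
          rw [br_diamond g b x w (brk g b f' h), br_star g b (g x) f' h,
            ih w hw (q+1) f' hf' h,
            br_diamond g b x w f', br_diamond g b x w h]
          rw [involute_grade p w hw, involute_grade (q+1) f' hf']
          simp only [map_add, LinearMap.add_apply, map_smul, LinearMap.smul_apply,
            smul_mul_assoc]
          rw [br_leib1 g b hw hq h, br_diamond g b x (brk g b w f') h,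
            involute_br g b hw hf', br_leib2 g b hf' hw (ctr (g x) h),
            br_leib2 g b hf' (ι_mem_extGrade x) (brk g b w h),
            br_skew g b hg hf' hw, br_skew g b hg hf' (ι_mem_extGrade x),
            br_keyop g b x f']
          simp only [smul_mul_assoc, mul_smul_comm, mul_add, smul_add, smul_smul, neg_smul,
            neg_mul, map_smul, LinearMap.smul_apply, map_add, LinearMap.add_apply, map_neg,
            LinearMap.neg_apply, neg_neg, smul_neg]
          match_scalars
          all_goals simp only [mul_one, ← pow_add]
          · rw [show (p+1)*q+(p+1)+(p+(q+1)*p) = (p+(q+1)) + 2*(p*q+p) from by ring]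
            exact pow_neg_one_two_mul _ _
          · rw [show (p+1)*q+(p+1)+(q+1) = (p*q+p) + 2*(q+1) from by ring]
            exact pow_neg_one_two_mul _ _
          · rw [show (p+1)*q+(p+1)+(q+1) = (p+p*q) + 2*(q+1) from by ring,
              ← pow_neg_one_two_mul (p+p*q) (q+1)]
            simp
          · rw [show (p+1)*q+(p+1)+(p+(q+1)*p) = (p+(q+1)) + 2*(p*q+p) from by ring,
              ← pow_neg_one_two_mul (p+(q+1)) (p*q+p)]
            simp
      · intro u₁ u₂ h1 h2
        simp only [map_add, LinearMap.add_apply, h1, h2, smul_add]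
        abel

end Bracket
end Aux

lemma sign1 (a b : ℕ) : ((-1:ℝ))^(((a:ℤ)-2)*((b:ℤ)-2)) = (-1:ℝ)^(a*b) := by
  have h : ((a:ℤ)-2)*((b:ℤ)-2) = ((a*b : ℕ) : ℤ) + 2*(2 - a - b) := by push_cast; ring
  rw [h, zpow_add₀ (by norm_num : (-1:ℝ) ≠ 0), zpow_natCast, zpow_mul]
  norm_num

lemma sign2 (a b : ℕ) : ((-1:ℝ))^(((a:ℤ)-2)*(b:ℤ)) = (-1:ℝ)^(a*b) := by
  have h : ((a:ℤ)-2)*(b:ℤ) = ((a*b : ℕ) : ℤ) + 2*(-(b:ℤ)) := by push_cast; ring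
  rw [h, zpow_add₀ (by norm_num : (-1:ℝ) ≠ 0), zpow_natCast, zpow_mul]
  norm_num

/-- For a finite-dimensional real vector space `V` with a
symmetric bilinear form `g`, the exterior algebra `ΛV` carries an ℝ-bilinear
bracket with `{1,·} = 0`, `{x,y} = g(x,y)·1`, `{x, y∧z} = {x,y}z − {x,z}y`
(for `x, y, z ∈ V`), which is a graded Poisson bracket of degree `−2`:
it satisfies axioms (i)–(iv) of a graded Poisson algebra with `k = −2`
(the grading is the standard one on `ΛV`, vanishing in negative degrees). -/
theorem exterior_algebra_graded_poisson_of_bilinear_form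
    (V : Type) [AddCommGroup V] [Module ℝ V] [FiniteDimensional ℝ V]
    (g : LinearMap.BilinForm ℝ V) (hg : ∀ x y : V, g x y = g y x) :
    ∃ br : ExteriorAlgebra ℝ V →ₗ[ℝ] ExteriorAlgebra ℝ V →ₗ[ℝ] ExteriorAlgebra ℝ V,
      -- (a) `{1, ·} = 0`
      (∀ a : ExteriorAlgebra ℝ V, br 1 a = 0) ∧
      -- (b) `{x, y} = g(x,y) · 1` for `x, y ∈ V`
      (∀ x y : V, br (ι ℝ x) (ι ℝ y) = algebraMap ℝ (ExteriorAlgebra ℝ V) (g x y)) ∧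
      -- (c) `{x, y ∧ z} = {x,y} z − {x,z} y` for `x, y, z ∈ V`
      (∀ x y z : V,
        br (ι ℝ x) (ι ℝ y * ι ℝ z) =
          br (ι ℝ x) (ι ℝ y) * ι ℝ z - br (ι ℝ x) (ι ℝ z) * ι ℝ y) ∧
      -- (i) the bracket has degree `k = −2`
      (∀ a b : ℕ, ∀ f ∈ extGrade V a, ∀ f' ∈ extGrade V b,
        (∀ c : ℕ, (c : ℤ) = (a : ℤ) + (b : ℤ) - 2 → br f f' ∈ extGrade V c) ∧
        ((a : ℤ) + (b : ℤ) - 2 < 0 → br f f' = 0)) ∧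
      -- (ii) graded skew-symmetry, with `k = −2`
      (∀ a b : ℕ, ∀ f ∈ extGrade V a, ∀ f' ∈ extGrade V b,
        br f f' = -(((-1 : ℝ) ^ (((a : ℤ) - 2) * ((b : ℤ) - 2))) • br f' f)) ∧
      -- (iii) graded Jacobi identity, with `k = −2`
      (∀ a b c : ℕ, ∀ f ∈ extGrade V a, ∀ f' ∈ extGrade V b, ∀ h ∈ extGrade V c,
        br f (br f' h) =
          br (br f f') h + ((-1 : ℝ) ^ (((a : ℤ) - 2) * ((b : ℤ) - 2))) • br f' (br f h)) ∧
      -- (iv) graded Leibniz identity, with `k = −2`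
      (∀ a b c : ℕ, ∀ f ∈ extGrade V a, ∀ f' ∈ extGrade V b, ∀ h ∈ extGrade V c,
        br f (f' * h) =
          br f f' * h + ((-1 : ℝ) ^ (((a : ℤ) - 2) * (b : ℤ))) • (f' * br f h)) := by
  classical
  let b : Module.Basis (Fin (Module.finrank ℝ V)) ℝ V := Module.finBasis ℝ V
  refine ⟨brk g b, fun a => br_one_left g b a, ?_, ?_, ?_, ?_, ?_, ?_⟩
  · intro x y
    rw [br_keyop g b x (ExteriorAlgebra.ι ℝ y)]
    exact CliffordAlgebra.contractLeft_ι _ _ _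
  · intro x y z
    rw [br_keyop g b x, br_keyop g b x, br_keyop g b x]
    rw [show ctr (g x) (ExteriorAlgebra.ι ℝ y * ExteriorAlgebra.ι ℝ z)
        = g x y • ExteriorAlgebra.ι ℝ z
          - ExteriorAlgebra.ι ℝ y * ctr (g x) (ExteriorAlgebra.ι ℝ z) from
      CliffordAlgebra.contractLeft_ι_mul _ _ _]
    rw [show ctr (g x) (ExteriorAlgebra.ι ℝ z)
        = algebraMap ℝ _ (g x z) from CliffordAlgebra.contractLeft_ι _ _ _]
    rw [show ctr (g x) (ExteriorAlgebra.ι ℝ y)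
        = algebraMap ℝ _ (g x y) from CliffordAlgebra.contractLeft_ι _ _ _]
    rw [Algebra.smul_def, ← Algebra.commutes (g x z) (ExteriorAlgebra.ι ℝ y)]
  · intro a b' f hf f' hf'
    constructor
    · intro c hc
      match a, b', hf, hf' with
      | 0, b', hf, hf' =>
          rw [br_zero_left g b hf]; exact Submodule.zero_mem _
      | a+1, 0, hf, hf' =>
          rw [br_zero_right g b hf']; exact Submodule.zero_mem _
      | p+1, q+1, hf, hf' =>
          have hcc : c = p + q := by push_cast at hc; omega
          subst hcc
          exact br_mem g b hf hf'
    · intro hlt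
      have h0 : a = 0 ∨ b' = 0 := by omega
      rcases h0 with h0 | h0
      · subst h0; exact br_zero_left g b hf f'
      · subst h0; exact br_zero_right g b hf' f
  · intro a b' f hf f' hf'
    rw [sign1 a b', ← neg_smul]
    exact br_skew g b hg hf hf'
  · intro a b' c f hf f' hf' h _
    rw [sign1 a b']
    exact br_jacobi g b hg a f hf b' f' hf' h
  · intro a b' c f hf f' hf' h _
    rw [sign2 a b']
    exact br_leib2 g b hf hf' h
end

section
/- Let (Ω¹(A), ⟦·,·⟧, ρ) be a Lie superalgebroid over a graded-commutative real algebra A whose anchor ρ is skew-supersymmetric, and suppose ⟦d f, d g⟧ = d{f, g} for all f, g ∈ A, where {f, g} := ρ(d f)(g). Then the bracket is completely determined on generators by ⟦f₁ d g₁, f₂ d g₂⟧ = f₁{g₁,f₂} d g₂ − (−1)^((p(f₁)+p(g₁))(p(f₂)+p(g₂))) f₂{g₂,f₁} d g₁ + (−1)^(p(f₁)p(f₂)+p(g₁)p(f₂)) f₂ f₁ d{g₁,g₂} for all homogeneous f₁, f₂, g₁, g₂ ∈ A. -/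
open TensorProduct

namespace SuperPoisson

variable (A : Type) [Ring A] [Algebra ℝ A]

/-- The sign `(−1)^(i·k)` attached to a pair of parities `i, k ∈ ℤ/2`. -/
def sgn (i k : ZMod 2) : ℝ := (-1 : ℝ) ^ (i.val * k.val)

lemma mul'_smul_left (a : A) (ω : A ⊗[ℝ] A) :
    LinearMap.mul' ℝ A (a • ω) = a * LinearMap.mul' ℝ A ω := by
  induction ω using TensorProduct.induction_on with
  | zero => simp
  | tmul x y =>
      rw [TensorProduct.smul_tmul']
      simp [LinearMap.mul'_apply, smul_eq_mul, mul_assoc]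
  | add x y hx hy => rw [smul_add, map_add, map_add, hx, hy, mul_add]

/-- `Ω¹(A)`: the kernel of the multiplication map `m : A ⊗_ℝ A → A`,
as an `A`-submodule of `A ⊗_ℝ A` (with `A` acting on the left tensor factor). -/
def Omega1 : Submodule A (A ⊗[ℝ] A) where
  carrier := {ω | LinearMap.mul' ℝ A ω = 0}
  add_mem' := by
    intro x y hx hy
    simp only [Set.mem_setOf_eq, map_add] at *
    rw [hx, hy, add_zero]
  zero_mem' := by simp
  smul_mem' := by
    intro a ω h
    simp only [Set.mem_setOf_eq] at *
    rw [mul'_smul_left, h, mul_zero]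

/-- The derivation `d a = a ⊗ 1 − 1 ⊗ a`. -/
noncomputable def dO (a : A) : A ⊗[ℝ] A := a ⊗ₜ[ℝ] 1 - 1 ⊗ₜ[ℝ] a

lemma dO_mem (a : A) : dO A a ∈ Omega1 A := by
  show LinearMap.mul' ℝ A (dO A a) = 0
  simp [dO, map_sub]

variable (𝒜 : ZMod 2 → Submodule ℝ A)

/-- The parity-`q` component of `A ⊗ A` (parity inherited from `A`):
the span of tensors `x ⊗ y` with `x, y` homogeneous and `p(x) + p(y) = q`. -/
def tdeg (q : ZMod 2) : Submodule ℝ (A ⊗[ℝ] A) :=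
  Submodule.span ℝ
    {ω | ∃ i k : ZMod 2, ∃ x ∈ 𝒜 i, ∃ y ∈ 𝒜 k, i + k = q ∧ ω = x ⊗ₜ[ℝ] y}

/-- `A` is graded-commutative (supercommutative). -/
def SuperComm : Prop :=
  ∀ i k : ZMod 2, ∀ a ∈ 𝒜 i, ∀ b ∈ 𝒜 k, a * b = sgn i k • (b * a)

/-- `D` is a superderivation of `A` of parity `q`. -/
def IsSuperDer (q : ZMod 2) (D : A →ₗ[ℝ] A) : Prop :=
  ∀ i : ZMod 2, ∀ f ∈ 𝒜 i, ∀ g : A, D (f * g) = D f * g + sgn q i • (f * D g)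

/-- The pairing of a (super)derivation `D` with `1`-forms, determined by
`⟨D, d f⟩ = D f` and `A`-linearity in the form: on a tensor `a ⊗ b ∈ Ω¹(A)`
it is given by `−a·D(b)`. -/
noncomputable def pairD (D : A →ₗ[ℝ] A) : A ⊗[ℝ] A →ₗ[ℝ] A :=
  - (LinearMap.mul' ℝ A ∘ₗ TensorProduct.map LinearMap.id D)

/-- A Lie superalgebroid structure on `Ω¹(A)`: an even `A`-linear anchor
`ρ : Ω¹(A) → Der(A)` and an ℝ-bilinear bracket `⟦·,·⟧` on `Ω¹(A)` which is a Lie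
superbracket satisfying the graded Leibniz rule (both `ρ` and the bracket are
recorded as ℝ-(bi)linear maps on the ambient space `A ⊗ A`; all axioms are
imposed on `Ω¹(A)`). -/
structure LieSuperalgebroid : Type where
  rho : A ⊗[ℝ] A →ₗ[ℝ] A →ₗ[ℝ] A
  br : A ⊗[ℝ] A →ₗ[ℝ] A ⊗[ℝ] A →ₗ[ℝ] A ⊗[ℝ] A
  br_mem : ∀ α ∈ Omega1 A, ∀ β ∈ Omega1 A, br α β ∈ Omega1 A
  rho_Alin : ∀ (a : A), ∀ α ∈ Omega1 A, rho (a • α) = a • rho α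
  rho_der : ∀ q : ZMod 2, ∀ α ∈ Omega1 A, α ∈ tdeg A 𝒜 q → IsSuperDer A 𝒜 q (rho α)
  skew : ∀ i k : ZMod 2, ∀ α ∈ Omega1 A, ∀ β ∈ Omega1 A,
    α ∈ tdeg A 𝒜 i → β ∈ tdeg A 𝒜 k → br α β = -(sgn i k • br β α)
  jacobi : ∀ i k m : ZMod 2, ∀ α ∈ Omega1 A, ∀ β ∈ Omega1 A, ∀ γ ∈ Omega1 A,
    α ∈ tdeg A 𝒜 i → β ∈ tdeg A 𝒜 k → γ ∈ tdeg A 𝒜 m →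
    br α (br β γ) = br (br α β) γ + sgn i k • br β (br α γ)
  leibniz : ∀ i k m : ZMod 2, ∀ α ∈ Omega1 A, α ∈ tdeg A 𝒜 i → ∀ f ∈ 𝒜 k,
    ∀ β ∈ Omega1 A, β ∈ tdeg A 𝒜 m →
    br α (f • β) = (rho α f) • β + sgn i k • (f • br α β)

/-- The anchor of a Lie superalgebroid is skew-supersymmetric:
`α(ρ(β)) = −(−1)^(p(α)p(β)) β(ρ(α))`. -/
def SkewAnchor (L : LieSuperalgebroid A 𝒜) : Prop :=
  ∀ i k : ZMod 2, ∀ α ∈ Omega1 A, ∀ β ∈ Omega1 A,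
    α ∈ tdeg A 𝒜 i → β ∈ tdeg A 𝒜 k →
    pairD A (L.rho β) α = -(sgn i k • pairD A (L.rho α) β)

end SuperPoisson

namespace SuperPoisson


section Helpers

variable (A : Type) [Ring A] [Algebra ℝ A] (𝒜 : ZMod 2 → Submodule ℝ A) [GradedAlgebra 𝒜]

lemma dO_tdeg (j : ZMod 2) (g : A) (hg : g ∈ 𝒜 j) : dO A g ∈ tdeg A 𝒜 j := by
  have h1 : (g ⊗ₜ[ℝ] (1:A)) ∈ tdeg A 𝒜 j :=
    Submodule.subset_span ⟨j, 0, g, hg, 1, SetLike.one_mem_graded 𝒜, by simp, rfl⟩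
  have h2 : ((1:A) ⊗ₜ[ℝ] g) ∈ tdeg A 𝒜 j :=
    Submodule.subset_span ⟨0, j, 1, SetLike.one_mem_graded 𝒜, g, hg, by simp, rfl⟩
  exact Submodule.sub_mem _ h1 h2

lemma smul_dO_tdeg (i j : ZMod 2) (f g : A) (hf : f ∈ 𝒜 i) (hg : g ∈ 𝒜 j) :
    f • dO A g ∈ tdeg A 𝒜 (i + j) := by
  have hrw : f • dO A g = (f * g) ⊗ₜ[ℝ] (1:A) - f ⊗ₜ[ℝ] g := by
    rw [dO, smul_sub, TensorProduct.smul_tmul', TensorProduct.smul_tmul']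
    simp [smul_eq_mul]
  rw [hrw]
  have h1 : ((f * g) ⊗ₜ[ℝ] (1:A)) ∈ tdeg A 𝒜 (i + j) :=
    Submodule.subset_span ⟨i + j, 0, f * g, SetLike.mul_mem_graded hf hg, 1,
      SetLike.one_mem_graded 𝒜, by simp, rfl⟩
  have h2 : (f ⊗ₜ[ℝ] g) ∈ tdeg A 𝒜 (i + j) :=
    Submodule.subset_span ⟨i, j, f, hf, g, hg, rfl, rfl⟩
  exact Submodule.sub_mem _ h1 h2

lemma key {M : Type*} [AddCommGroup M] [Module ℝ M] (a b c d e f : ℝ) (X Y V : M)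
    (h1 : a * (b * c) = 1) (h2 : a * (b * (c * (d * e))) = f) :
    -(a • Y + a • b • -(c • (X + d • e • V))) = X - a • Y + f • V := by
  match_scalars
  all_goals first
  | linear_combination h1
  | linear_combination -h1
  | linear_combination h2
  | linear_combination -h2
  | ring

lemma sgn_aux1 : ∀ i₁ j₁ i₂ j₂ : ZMod 2,
    sgn (i₁+j₁) (i₂+j₂) * (sgn (i₂+j₂) i₁ * sgn (i₂+j₂) j₁) = 1 := by
  intro i₁ j₁ i₂ j₂
  have h01 : ∀ x : ZMod 2, x = 0 ∨ x = 1 := by decide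
  rcases h01 i₁ with rfl | rfl <;> rcases h01 j₁ with rfl | rfl <;>
    rcases h01 i₂ with rfl | rfl <;> rcases h01 j₂ with rfl | rfl <;>
    norm_num [sgn, show (ZMod.val (1:ZMod 2)) = 1 from rfl,
      show (ZMod.val (2:ZMod 2)) = 0 from rfl]

lemma sgn_aux2 : ∀ i₁ j₁ i₂ j₂ : ZMod 2,
    sgn (i₁+j₁) (i₂+j₂) * (sgn (i₂+j₂) i₁ * (sgn (i₂+j₂) j₁ * (sgn j₁ i₂ * sgn i₁ i₂)))
      = (-1 : ℝ) ^ (i₁.val * i₂.val + j₁.val * i₂.val) := by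
  intro i₁ j₁ i₂ j₂
  have h01 : ∀ x : ZMod 2, x = 0 ∨ x = 1 := by decide
  rcases h01 i₁ with rfl | rfl <;> rcases h01 j₁ with rfl | rfl <;>
    rcases h01 i₂ with rfl | rfl <;> rcases h01 j₂ with rfl | rfl <;>
    norm_num [sgn, show (ZMod.val (1:ZMod 2)) = 1 from rfl,
      show (ZMod.val (2:ZMod 2)) = 0 from rfl]

end Helpers

/-- If the anchor of a Lie superalgebroid `(Ω¹(A), ⟦·,·⟧, ρ)`
is skew-supersymmetric and `⟦d f, d g⟧ = d{f, g}` (with `{f,g} := ρ(d f)(g)`),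
then the bracket is given on generators by the explicit Poisson-type formula. -/
theorem bracket_determined_on_generators
    (A : Type) [Ring A] [Algebra ℝ A] (𝒜 : ZMod 2 → Submodule ℝ A) [GradedAlgebra 𝒜]
    (hcomm : SuperComm A 𝒜) (L : LieSuperalgebroid A 𝒜)
    (hsk : SkewAnchor A 𝒜 L)
    (hdd : ∀ f g : A, L.br (dO A f) (dO A g) = dO A (L.rho (dO A f) g)) :
    ∀ i₁ j₁ i₂ j₂ : ZMod 2, ∀ f₁ ∈ 𝒜 i₁, ∀ g₁ ∈ 𝒜 j₁, ∀ f₂ ∈ 𝒜 i₂, ∀ g₂ ∈ 𝒜 j₂,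
      L.br (f₁ • dO A g₁) (f₂ • dO A g₂) =
        (f₁ * L.rho (dO A g₁) f₂) • dO A g₂
          - sgn (i₁ + j₁) (i₂ + j₂) • ((f₂ * L.rho (dO A g₂) f₁) • dO A g₁)
          + ((-1 : ℝ) ^ (i₁.val * i₂.val + j₁.val * i₂.val)) •
              ((f₂ * f₁) • dO A (L.rho (dO A g₁) g₂)) := by
  intro i₁ j₁ i₂ j₂ f₁ hf₁ g₁ hg₁ f₂ hf₂ g₂ hg₂
  have m1 : dO A g₁ ∈ Omega1 A := dO_mem A g₁
  have m2 : dO A g₂ ∈ Omega1 A := dO_mem A g₂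
  have m1' : f₁ • dO A g₁ ∈ Omega1 A := Submodule.smul_mem _ _ m1
  have m2' : f₂ • dO A g₂ ∈ Omega1 A := Submodule.smul_mem _ _ m2
  have t1 : dO A g₁ ∈ tdeg A 𝒜 j₁ := dO_tdeg A 𝒜 j₁ g₁ hg₁
  have t2 : dO A g₂ ∈ tdeg A 𝒜 j₂ := dO_tdeg A 𝒜 j₂ g₂ hg₂
  have t1' : f₁ • dO A g₁ ∈ tdeg A 𝒜 (i₁ + j₁) := smul_dO_tdeg A 𝒜 i₁ j₁ f₁ g₁ hf₁ hg₁
  have t2' : f₂ • dO A g₂ ∈ tdeg A 𝒜 (i₂ + j₂) := smul_dO_tdeg A 𝒜 i₂ j₂ f₂ g₂ hf₂ hg₂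
  have h1 : L.br (dO A g₁) (f₂ • dO A g₂)
      = (L.rho (dO A g₁) f₂) • dO A g₂
        + sgn j₁ i₂ • (f₂ • dO A (L.rho (dO A g₁) g₂)) := by
    rw [L.leibniz j₁ i₂ j₂ _ m1 t1 f₂ hf₂ _ m2 t2, hdd]
  have h2 : L.br (f₂ • dO A g₂) (dO A g₁)
      = -(sgn (i₂ + j₂) j₁ • L.br (dO A g₁) (f₂ • dO A g₂)) :=
    L.skew (i₂ + j₂) j₁ _ m2' _ m1 t2' t1
  have hr : L.rho (f₂ • dO A g₂) f₁ = f₂ * L.rho (dO A g₂) f₁ := by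
    rw [L.rho_Alin f₂ _ m2]; rfl
  have h3 : L.br (f₂ • dO A g₂) (f₁ • dO A g₁)
      = (f₂ * L.rho (dO A g₂) f₁) • dO A g₁
        + sgn (i₂ + j₂) i₁ • (f₁ • L.br (f₂ • dO A g₂) (dO A g₁)) := by
    rw [L.leibniz (i₂ + j₂) i₁ j₁ _ m2' t2' f₁ hf₁ _ m1 t1, hr]
  have h4 : L.br (f₁ • dO A g₁) (f₂ • dO A g₂)
      = -(sgn (i₁ + j₁) (i₂ + j₂) • L.br (f₂ • dO A g₂) (f₁ • dO A g₁)) :=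
    L.skew (i₁ + j₁) (i₂ + j₂) _ m1' _ m2' t1' t2'
  have e1 : f₁ • (L.rho (dO A g₁) f₂ • dO A g₂)
      = (f₁ * L.rho (dO A g₁) f₂) • dO A g₂ := smul_smul _ _ _
  have e2 : f₁ • (f₂ • dO A (L.rho (dO A g₁) g₂))
      = sgn i₁ i₂ • ((f₂ * f₁) • dO A (L.rho (dO A g₁) g₂)) := by
    rw [smul_smul, hcomm i₁ i₂ f₁ hf₁ f₂ hf₂, smul_assoc]
  rw [h4, h3, h2, h1]
  rw [smul_neg, smul_add, smul_comm f₁ (sgn (i₂ + j₂) j₁), smul_add, e1,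
    smul_comm f₁ (sgn j₁ i₂), e2]
  exact key (M := A ⊗[ℝ] A) _ _ _ _ _ _ _ _ _ (sgn_aux1 i₁ j₁ i₂ j₂) (sgn_aux2 i₁ j₁ i₂ j₂)


end SuperPoisson
end

section
/- Let A be a graded-commutative real algebra and let [·,·] be a Gerstenhaber superalgebra bracket of ℤ-degree −1 on Ω(A). Then, setting ⟦α, β⟧ := [α, β] for α, β ∈ Ω¹(A) and ρ(α) := [α, ·] restricted to A = Ω⁰(A), the pair (⟦·,·⟧, ρ) is a Lie superalgebroid structure on Ω¹(A); in particular, for each homogeneous α ∈ Ω¹(A) the map [α, ·] : A → A is a superderivation of A of parity p(α). -/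
open TensorProduct

namespace SuperPoisson

variable (A : Type) [Ring A] [Algebra ℝ A]

variable (𝒜 : ZMod 2 → Submodule ℝ A)

lemma sgn_triple (s q t : ZMod 2) :
    ((-1:ℝ) ^ ((s + q).val * t.val)) *
      (((-1:ℝ) ^ (t.val * s.val)) * ((-1:ℝ) ^ (t.val * q.val))) = 1 := by
  fin_cases s <;> fin_cases q <;> fin_cases t <;>
    simp +decide [ZMod.val]

lemma zmod2_sum {M : Type*} [AddCommMonoid M] (f : ZMod 2 → M) :
    ∑ i : ZMod 2, f i = f 0 + f 1 := by
  have h : (Finset.univ : Finset (ZMod 2)) = {0, 1} := by decide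
  rw [h, Finset.sum_insert (by decide), Finset.sum_singleton]

variable [GradedAlgebra 𝒜]

noncomputable def pj (q : ZMod 2) : A →ₗ[ℝ] A :=
  (𝒜 q).subtype ∘ₗ (DirectSum.component ℝ (ZMod 2) (fun i => ↥(𝒜 i)) q) ∘ₗ
    (DirectSum.decomposeLinearEquiv 𝒜).toLinearMap

lemma pj_apply (q : ZMod 2) (a : A) : pj A 𝒜 q a = (DirectSum.decompose 𝒜 a q : A) := rfl

lemma pj_mem (q : ZMod 2) (a : A) : pj A 𝒜 q a ∈ 𝒜 q := (DirectSum.decompose 𝒜 a q).2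

lemma pj_sum (a : A) : pj A 𝒜 0 a + pj A 𝒜 1 a = a := by
  classical
  have h2 : ∑ i : ZMod 2, (DirectSum.decompose 𝒜 a i : A) = a := by
    conv_rhs => rw [← DirectSum.sum_support_decompose 𝒜 a]
    symm
    apply Finset.sum_subset (Finset.subset_univ _)
    intro i _ hi
    rw [DFinsupp.notMem_support_iff.mp hi, ZeroMemClass.coe_zero]
  rw [pj_apply, pj_apply]
  conv_rhs => rw [← h2]
  rw [zmod2_sum (fun i => (DirectSum.decompose 𝒜 a i : A))]

lemma zmod2_indep {a₀ a₁ : A} (h0 : a₀ ∈ 𝒜 0) (h1 : a₁ ∈ 𝒜 1) (h : a₀ + a₁ = 0) :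
    a₀ = 0 ∧ a₁ = 0 := by
  constructor
  · have := congrArg (fun x => (DirectSum.decompose 𝒜 x 0 : A)) h
    simpa [DirectSum.decompose_add, DirectSum.decompose_of_mem_same 𝒜 h0,
      DirectSum.decompose_of_mem_ne 𝒜 h1 (show (1:ZMod 2) ≠ 0 by decide)] using this
  · have := congrArg (fun x => (DirectSum.decompose 𝒜 x 1 : A)) h
    simpa [DirectSum.decompose_add, DirectSum.decompose_of_mem_same 𝒜 h1,
      DirectSum.decompose_of_mem_ne 𝒜 h0 (show (0:ZMod 2) ≠ 1 by decide)] using this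

lemma tQ_mem_tdeg (i k : ZMod 2) (ω : A ⊗[ℝ] A) :
    TensorProduct.map (pj A 𝒜 i) (pj A 𝒜 k) ω ∈ tdeg A 𝒜 (i + k) := by
  induction ω using TensorProduct.induction_on with
  | zero => simp
  | tmul x y =>
      rw [TensorProduct.map_tmul]
      exact Submodule.subset_span ⟨i, k, _, pj_mem A 𝒜 i x, _, pj_mem A 𝒜 k y, rfl, rfl⟩
  | add x y hx hy => rw [map_add]; exact add_mem hx hy

lemma tQ_mul_mem (i k : ZMod 2) (ω : A ⊗[ℝ] A) :
    LinearMap.mul' ℝ A (TensorProduct.map (pj A 𝒜 i) (pj A 𝒜 k) ω) ∈ 𝒜 (i + k) := by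
  induction ω using TensorProduct.induction_on with
  | zero => simp
  | tmul x y =>
      rw [TensorProduct.map_tmul, LinearMap.mul'_apply]
      exact SetLike.mul_mem_graded (pj_mem A 𝒜 i x) (pj_mem A 𝒜 k y)
  | add x y hx hy => rw [map_add, map_add]; exact add_mem hx hy

lemma tQ_sum (ω : A ⊗[ℝ] A) :
    (TensorProduct.map (pj A 𝒜 0) (pj A 𝒜 0) ω + TensorProduct.map (pj A 𝒜 1) (pj A 𝒜 1) ω)
      + (TensorProduct.map (pj A 𝒜 0) (pj A 𝒜 1) ω
        + TensorProduct.map (pj A 𝒜 1) (pj A 𝒜 0) ω) = ω := by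
  induction ω using TensorProduct.induction_on with
  | zero => simp
  | tmul x y =>
      simp only [TensorProduct.map_tmul]
      conv_rhs => rw [← pj_sum A 𝒜 x, ← pj_sum A 𝒜 y]
      rw [TensorProduct.add_tmul, TensorProduct.tmul_add, TensorProduct.tmul_add]
      abel
  | add x y hx hy =>
      simp only [map_add]
      conv_rhs => rw [← hx, ← hy]
      abel

lemma omega1_split {α : A ⊗[ℝ] A} (hα : α ∈ Omega1 A) :
    ∃ α₀ α₁ : A ⊗[ℝ] A, α₀ ∈ Omega1 A ∧ α₀ ∈ tdeg A 𝒜 0 ∧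
      α₁ ∈ Omega1 A ∧ α₁ ∈ tdeg A 𝒜 1 ∧ α = α₀ + α₁ := by
  set α₀ := TensorProduct.map (pj A 𝒜 0) (pj A 𝒜 0) α
      + TensorProduct.map (pj A 𝒜 1) (pj A 𝒜 1) α with hd0
  set α₁ := TensorProduct.map (pj A 𝒜 0) (pj A 𝒜 1) α
      + TensorProduct.map (pj A 𝒜 1) (pj A 𝒜 0) α with hd1
  have hsum : α₀ + α₁ = α := tQ_sum A 𝒜 α
  have ht0 : α₀ ∈ tdeg A 𝒜 0 := by
    have h1 := tQ_mem_tdeg A 𝒜 0 0 α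
    have h2 := tQ_mem_tdeg A 𝒜 1 1 α
    rw [show (0+0 : ZMod 2) = 0 from rfl] at h1
    rw [show (1+1 : ZMod 2) = 0 by decide] at h2
    exact add_mem h1 h2
  have ht1 : α₁ ∈ tdeg A 𝒜 1 := by
    have h1 := tQ_mem_tdeg A 𝒜 0 1 α
    have h2 := tQ_mem_tdeg A 𝒜 1 0 α
    rw [show (0+1 : ZMod 2) = 1 by decide] at h1
    rw [show (1+0 : ZMod 2) = 1 by decide] at h2
    exact add_mem h1 h2
  have hm0 : LinearMap.mul' ℝ A α₀ ∈ 𝒜 0 := by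
    rw [hd0, map_add]
    have h1 := tQ_mul_mem A 𝒜 0 0 α
    have h2 := tQ_mul_mem A 𝒜 1 1 α
    rw [show (0+0 : ZMod 2) = 0 from rfl] at h1
    rw [show (1+1 : ZMod 2) = 0 by decide] at h2
    exact add_mem h1 h2
  have hm1 : LinearMap.mul' ℝ A α₁ ∈ 𝒜 1 := by
    rw [hd1, map_add]
    have h1 := tQ_mul_mem A 𝒜 0 1 α
    have h2 := tQ_mul_mem A 𝒜 1 0 α
    rw [show (0+1 : ZMod 2) = 1 by decide] at h1
    rw [show (1+0 : ZMod 2) = 1 by decide] at h2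
    exact add_mem h1 h2
  have hz : LinearMap.mul' ℝ A α₀ + LinearMap.mul' ℝ A α₁ = 0 := by
    rw [← map_add, hsum]; exact hα
  obtain ⟨e0, e1⟩ := zmod2_indep A 𝒜 hm0 hm1 hz
  exact ⟨α₀, α₁, e0, ht0, e1, ht1, hsum.symm⟩


end SuperPoisson

namespace SuperPoisson

/-- A Gerstenhaber superalgebra bracket `[·,·]` of ℤ-degree
`−1` on `Ω(A)` restricts to a Lie superalgebroid structure on `Ω¹(A)`, with
bracket `⟦α,β⟧ = [α,β]` and anchor `ρ(α) = [α,·]|_A`; in particular `[α,·]|_A`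
is a superderivation of `A` of parity `p(α)`. -/
theorem gerstenhaber_gives_lie_superalgebroid
    (A : Type) [Ring A] [Algebra ℝ A] (𝒜 : ZMod 2 → Submodule ℝ A) [GradedAlgebra 𝒜]
    (hcomm : SuperComm A 𝒜)
    -- A model `Ω` of the algebra `Ω(A) = ⊕_{r} (Ω¹(A))^r` of graded forms:
    (Ω : Type) [Ring Ω] [Algebra ℝ Ω]
    (grade : ℕ → ZMod 2 → Submodule ℝ Ω)
    (hdecomp : DirectSum.IsInternal (fun p : ℕ × ZMod 2 => grade p.1 p.2))
    (hone : (1 : Ω) ∈ grade 0 0)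
    (hmul : ∀ (r s : ℕ) (q t : ZMod 2), ∀ x ∈ grade r q, ∀ y ∈ grade s t,
      x * y ∈ grade (r + s) (q + t))
    (hscomm : ∀ (r s : ℕ) (q t : ZMod 2), ∀ x ∈ grade r q, ∀ y ∈ grade s t,
      x * y = ((-1 : ℝ) ^ (r * s + q.val * t.val)) • (y * x))
    (ι : A →ₐ[ℝ] Ω) (hι_inj : Function.Injective ι)
    (hι_grade : ∀ q : ZMod 2, Submodule.map ι.toLinearMap (𝒜 q) = grade 0 q)
    (j : A ⊗[ℝ] A → Ω)
    (hj_add : ∀ α ∈ Omega1 A, ∀ β ∈ Omega1 A, j (α + β) = j α + j β)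
    (hj_smul : ∀ (a : A), ∀ α ∈ Omega1 A, j (a • α) = ι a * j α)
    (hj_inj : ∀ α ∈ Omega1 A, ∀ β ∈ Omega1 A, j α = j β → α = β)
    (hj_grade : ∀ q : ZMod 2, ∀ α ∈ Omega1 A, α ∈ tdeg A 𝒜 q → j α ∈ grade 1 q)
    (hj_surj : ∀ q : ZMod 2, ∀ x ∈ grade 1 q,
      ∃ α ∈ Omega1 A, α ∈ tdeg A 𝒜 q ∧ j α = x)
    (hgen : Algebra.adjoin ℝ
      (Set.range ι ∪ j '' (Omega1 A : Set (A ⊗[ℝ] A))) = ⊤)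
    -- a Gerstenhaber superalgebra bracket of ℤ-degree −1 on `Ω(A)`:
    (gb : Ω →ₗ[ℝ] Ω →ₗ[ℝ] Ω)
    (hgb_deg : ∀ (r s : ℕ) (q t : ZMod 2), ∀ x ∈ grade r q, ∀ y ∈ grade s t,
      (∀ u : ℕ, (u : ℤ) = (r : ℤ) + (s : ℤ) - 1 → gb x y ∈ grade u (q + t)) ∧
      ((r : ℤ) + (s : ℤ) - 1 < 0 → gb x y = 0))
    (hgb_skew : ∀ (r s : ℕ) (q t : ZMod 2), ∀ x ∈ grade r q, ∀ y ∈ grade s t,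
      gb x y = -((((-1 : ℝ) ^ (((r : ℤ) - 1) * ((s : ℤ) - 1))) *
        ((-1 : ℝ) ^ (q.val * t.val))) • gb y x))
    (hgb_jac : ∀ (r s u : ℕ) (q t v : ZMod 2),
      ∀ x ∈ grade r q, ∀ y ∈ grade s t, ∀ z ∈ grade u v,
      gb x (gb y z) = gb (gb x y) z +
        ((((-1 : ℝ) ^ (((r : ℤ) - 1) * ((s : ℤ) - 1))) *
          ((-1 : ℝ) ^ (q.val * t.val))) • gb y (gb x z)))
    (hgb_leib : ∀ (r s u : ℕ) (q t v : ZMod 2),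
      ∀ x ∈ grade r q, ∀ y ∈ grade s t, ∀ z ∈ grade u v,
      gb x (y * z) = (gb x y) * z +
        ((((-1 : ℝ) ^ (((r : ℤ) - 1) * (s : ℤ))) *
          ((-1 : ℝ) ^ (q.val * t.val))) • (y * gb x z)))
    :
    ∃ L : LieSuperalgebroid A 𝒜,
      (∀ α ∈ Omega1 A, ∀ β ∈ Omega1 A, j (L.br α β) = gb (j α) (j β)) ∧
      (∀ α ∈ Omega1 A, ∀ f : A, ι (L.rho α f) = gb (j α) (ι f)) ∧
      (∀ q : ZMod 2, ∀ α ∈ Omega1 A, α ∈ tdeg A 𝒜 q → IsSuperDer A 𝒜 q (L.rho α)) := by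
  classical
  -- `j` as a linear map on `Ω¹(A)`
  let Ω1 : Submodule ℝ (A ⊗[ℝ] A) := (Omega1 A).restrictScalars ℝ
  let jl : Ω1 →ₗ[ℝ] Ω :=
    { toFun := fun α => j α.1
      map_add' := fun α β => hj_add _ α.2 _ β.2
      map_smul' := by
        intro r α
        have h1 : (r : ℝ) • (α : A ⊗[ℝ] A) = (algebraMap ℝ A r) • (α : A ⊗[ℝ] A) :=
          (algebraMap_smul A r _).symm
        show j (r • (α : A ⊗[ℝ] A)) = r • j α.1
        rw [h1, hj_smul _ _ α.2, ι.commutes, ← Algebra.smul_def] }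
  have hjl : ∀ α : Ω1, jl α = j α.1 := fun _ => rfl
  -- the projection onto `Ω¹(A)` splitting the inclusion
  have hPl0 : ∀ ω : A ⊗[ℝ] A,
      ω - (LinearMap.mul' ℝ A ω) ⊗ₜ[ℝ] (1:A) ∈ (Omega1 A).restrictScalars ℝ := by
    intro ω
    show LinearMap.mul' ℝ A _ = 0
    rw [map_sub, LinearMap.mul'_apply, mul_one, sub_self]
  let Pl : A ⊗[ℝ] A →ₗ[ℝ] Ω1 :=
    LinearMap.codRestrict Ω1
      (LinearMap.id - ((TensorProduct.mk ℝ A A).flip 1) ∘ₗ LinearMap.mul' ℝ A)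
      (fun ω => hPl0 ω)
  have hPl_eq : ∀ α : A ⊗[ℝ] A, ∀ hα : α ∈ Omega1 A, (Pl α : A ⊗[ℝ] A) = α := by
    intro α hα
    have hm : LinearMap.mul' ℝ A α = 0 := hα
    show α - (LinearMap.mul' ℝ A α) ⊗ₜ[ℝ] (1:A) = α
    rw [hm, TensorProduct.zero_tmul, sub_zero]
  -- left inverses of `ι` and `jl`
  obtain ⟨ιinv, hιinv⟩ := LinearMap.exists_leftInverse_of_injective ι.toLinearMap
    (LinearMap.ker_eq_bot.mpr hι_inj)
  have hjl_inj : Function.Injective jl := by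
    intro x y hxy
    exact Subtype.ext (hj_inj _ x.2 _ y.2 hxy)
  obtain ⟨jinv, hjinv⟩ := jl.exists_leftInverse_of_injective (LinearMap.ker_eq_bot.mpr hjl_inj)
  have hjinv' : ∀ x ∈ LinearMap.range jl, jl (jinv x) = x := by
    rintro _ ⟨y, rfl⟩
    have h := LinearMap.congr_fun hjinv y
    simp only [LinearMap.coe_comp, Function.comp_apply, LinearMap.id_coe, id_eq] at h
    rw [h]
  have hιinv' : ∀ x ∈ LinearMap.range ι.toLinearMap, ι (ιinv x) = x := by
    rintro _ ⟨y, rfl⟩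
    have h := LinearMap.congr_fun hιinv y
    simp only [LinearMap.coe_comp, Function.comp_apply, LinearMap.id_coe, id_eq] at h
    rw [h]
    rfl
  -- the bracket and the anchor
  let brm : A ⊗[ℝ] A →ₗ[ℝ] A ⊗[ℝ] A →ₗ[ℝ] A ⊗[ℝ] A :=
    (gb.compl₁₂ (jl ∘ₗ Pl) (jl ∘ₗ Pl)).compr₂ (Ω1.subtype ∘ₗ jinv)
  let rhom : A ⊗[ℝ] A →ₗ[ℝ] A →ₗ[ℝ] A :=
    (gb.compl₁₂ (jl ∘ₗ Pl) ι.toLinearMap).compr₂ ιinv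
  have hbr_def : ∀ α β : A ⊗[ℝ] A,
      brm α β = (jinv (gb (jl (Pl α)) (jl (Pl β))) : A ⊗[ℝ] A) := fun _ _ => rfl
  have hrho_def : ∀ (α : A ⊗[ℝ] A) (f : A),
      rhom α f = ιinv (gb (jl (Pl α)) (ι f)) := fun _ _ => rfl
  have hjlPl : ∀ α ∈ Omega1 A, jl (Pl α) = j α := by
    intro α hα
    rw [hjl]
    exact congrArg j (hPl_eq α hα)
  have hbm : ∀ α β : A ⊗[ℝ] A, brm α β ∈ Omega1 A := fun α β => (jinv _).2
  -- grading facts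
  have hιmem : ∀ t : ZMod 2, ∀ g ∈ 𝒜 t, ι g ∈ grade 0 t := by
    intro t g hg
    rw [← hι_grade t]
    exact ⟨g, hg, rfl⟩
  have hjG : ∀ α ∈ Omega1 A, ∃ x₀ ∈ grade 1 0, ∃ x₁ ∈ grade 1 1, j α = x₀ + x₁ := by
    intro α hα
    obtain ⟨α₀, α₁, h₀m, h₀t, h₁m, h₁t, rfl⟩ := omega1_split A 𝒜 hα
    exact ⟨j α₀, hj_grade 0 α₀ h₀m h₀t, j α₁, hj_grade 1 α₁ h₁m h₁t, hj_add α₀ h₀m α₁ h₁m⟩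
  have hg1range : ∀ q : ZMod 2, ∀ x ∈ grade 1 q, x ∈ LinearMap.range jl := by
    intro q x hx
    obtain ⟨α, hα, _, hjx⟩ := hj_surj q x hx
    exact ⟨⟨α, hα⟩, hjx⟩
  have hg0range : ∀ q : ZMod 2, ∀ x ∈ grade 0 q, x ∈ LinearMap.range ι.toLinearMap := by
    intro q x hx
    rw [← hι_grade q] at hx
    obtain ⟨f, _, hf⟩ := hx
    exact ⟨f, hf⟩
  have hgb_mem11 : ∀ α ∈ Omega1 A, ∀ β ∈ Omega1 A, gb (j α) (j β) ∈ LinearMap.range jl := by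
    intro α hα β hβ
    obtain ⟨x₀, hx₀, x₁, hx₁, hje⟩ := hjG α hα
    obtain ⟨y₀, hy₀, y₁, hy₁, hje'⟩ := hjG β hβ
    have key : ∀ (q t : ZMod 2), ∀ x ∈ grade 1 q, ∀ y ∈ grade 1 t,
        gb x y ∈ LinearMap.range jl := by
      intro q t x hx y hy
      exact hg1range _ _ ((hgb_deg 1 1 q t x hx y hy).1 1 (by norm_num))
    rw [hje, hje']
    simp only [map_add, LinearMap.add_apply]
    exact add_mem (add_mem (key _ _ _ hx₀ _ hy₀) (key _ _ _ hx₁ _ hy₀))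
      (add_mem (key _ _ _ hx₀ _ hy₁) (key _ _ _ hx₁ _ hy₁))
  have hgb_mem10 : ∀ α ∈ Omega1 A, ∀ f : A,
      gb (j α) (ι f) ∈ LinearMap.range ι.toLinearMap := by
    intro α hα f
    obtain ⟨x₀, hx₀, x₁, hx₁, hje⟩ := hjG α hα
    have key : ∀ (q t : ZMod 2), ∀ x ∈ grade 1 q, ∀ g ∈ 𝒜 t,
        gb x (ι g) ∈ LinearMap.range ι.toLinearMap := by
      intro q t x hx g hg
      exact hg0range _ _ ((hgb_deg 1 0 q t x hx (ι g) (hιmem t g hg)).1 0 (by norm_num))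
    have hfd : ι f = ι (pj A 𝒜 0 f) + ι (pj A 𝒜 1 f) := by
      rw [← map_add, pj_sum]
    rw [hje, hfd]
    simp only [map_add, LinearMap.add_apply]
    exact add_mem (add_mem (key _ _ _ hx₀ _ (pj_mem A 𝒜 0 f)) (key _ _ _ hx₁ _ (pj_mem A 𝒜 0 f)))
      (add_mem (key _ _ _ hx₀ _ (pj_mem A 𝒜 1 f)) (key _ _ _ hx₁ _ (pj_mem A 𝒜 1 f)))
  -- the two compatibility identities
  have hbrj : ∀ α ∈ Omega1 A, ∀ β ∈ Omega1 A, j (brm α β) = gb (j α) (j β) := by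
    intro α hα β hβ
    have h1 : brm α β = (jinv (gb (j α) (j β)) : A ⊗[ℝ] A) := by
      rw [hbr_def, hjlPl α hα, hjlPl β hβ]
    rw [h1]
    exact hjinv' _ (hgb_mem11 α hα β hβ)
  have hrhoj : ∀ α ∈ Omega1 A, ∀ f : A, ι (rhom α f) = gb (j α) (ι f) := by
    intro α hα f
    have h1 : rhom α f = ιinv (gb (j α) (ι f)) := by
      rw [hrho_def, hjlPl α hα]
    rw [h1]
    exact hιinv' _ (hgb_mem10 α hα f)
  -- j distributes over ℝ-linear combinations of elements of Ω¹
  have hj_lin : ∀ X ∈ Omega1 A, ∀ Y ∈ Omega1 A, ∀ c : ℝ, j (X + c • Y) = j X + c • j Y := by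
    intro X hX Y hY c
    have h1 : j (X + c • Y) = jl ((⟨X, hX⟩ : Ω1) + c • (⟨Y, hY⟩ : Ω1)) := rfl
    rw [h1, map_add, map_smul, hjl, hjl]
  have hj_negsmul : ∀ Y ∈ Omega1 A, ∀ c : ℝ, j (-(c • Y)) = -(c • j Y) := by
    intro Y hY c
    have h1 : j (-(c • Y)) = jl (-(c • (⟨Y, hY⟩ : Ω1))) := rfl
    rw [h1, map_neg, map_smul, hjl]
  have hsmul_mem : ∀ Y ∈ Omega1 A, ∀ c : ℝ, c • Y ∈ Omega1 A := by
    intro Y hY c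
    exact Submodule.smul_mem ((Omega1 A).restrictScalars ℝ) c hY
  -- homogeneous multiplicativity: gb (b * x) y = b * gb x y
  have hmulhom : ∀ (s q t : ZMod 2), ∀ b ∈ grade 0 s, ∀ x ∈ grade 1 q, ∀ y ∈ grade 0 t,
      gb (b * x) y = b * gb x y := by
    intro s q t b hb x hx y hy
    have hbx : b * x ∈ grade 1 (s + q) := hmul 0 1 s q b hb x hx
    have h1 := hgb_skew 1 0 (s+q) t (b*x) hbx y hy
    have h2 := hgb_leib 0 0 1 t s q y hy b hb x hx
    have h3 := (hgb_deg 0 0 t s y hy b hb).2 (by norm_num)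
    have h4 := hgb_skew 0 1 t q y hy x hx
    rw [h2, h3, zero_mul, zero_add, h4] at h1
    rw [h1]
    rw [mul_neg, smul_neg, smul_neg, neg_neg, mul_smul_comm, smul_smul, smul_smul]
    convert one_smul ℝ (b * (gb x) y) using 2
    have h5 := sgn_triple s q t
    norm_num
    linear_combination h5
  -- degree-0 multiplicativity in the first slot, general forms
  have hmul2 : ∀ (s t : ZMod 2), ∀ b ∈ grade 0 s, ∀ α ∈ Omega1 A, ∀ y ∈ grade 0 t,
      gb (b * j α) y = b * gb (j α) y := by
    intro s t b hb α hα y hy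
    obtain ⟨x₀, hx₀, x₁, hx₁, hje⟩ := hjG α hα
    rw [hje, mul_add]
    simp only [map_add, LinearMap.add_apply]
    rw [hmulhom s 0 t b hb x₀ hx₀ y hy, hmulhom s 1 t b hb x₁ hx₁ y hy, mul_add]
  have hmul3 : ∀ (s : ZMod 2), ∀ b ∈ grade 0 s, ∀ α ∈ Omega1 A, ∀ f : A,
      gb (b * j α) (ι f) = b * gb (j α) (ι f) := by
    intro s b hb α hα f
    have hfd : ι f = ι (pj A 𝒜 0 f) + ι (pj A 𝒜 1 f) := by rw [← map_add, pj_sum]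
    rw [hfd, map_add (gb (b * j α)), map_add (gb (j α)), mul_add,
      hmul2 s 0 b hb α hα _ (hιmem 0 _ (pj_mem A 𝒜 0 f)),
      hmul2 s 1 b hb α hα _ (hιmem 1 _ (pj_mem A 𝒜 1 f))]
  have hgbmul : ∀ a : A, ∀ α ∈ Omega1 A, ∀ f : A,
      gb (ι a * j α) (ι f) = ι a * gb (j α) (ι f) := by
    intro a α hα f
    have had : ι a = ι (pj A 𝒜 0 a) + ι (pj A 𝒜 1 a) := by rw [← map_add, pj_sum]
    rw [had]
    simp only [add_mul, map_add, LinearMap.add_apply]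
    rw [hmul3 0 _ (hιmem 0 _ (pj_mem A 𝒜 0 a)) α hα f,
      hmul3 1 _ (hιmem 1 _ (pj_mem A 𝒜 1 a)) α hα f]
  -- A-linearity of the anchor
  have hAlin : ∀ (a : A), ∀ α ∈ Omega1 A, rhom (a • α) = a • rhom α := by
    intro a α hα
    apply LinearMap.ext
    intro f
    apply hι_inj
    have hmem : a • α ∈ Omega1 A := Submodule.smul_mem _ a hα
    rw [LinearMap.smul_apply, hrhoj _ hmem f, hj_smul a α hα, hgbmul a α hα f, ← hrhoj α hα f,
      smul_eq_mul, map_mul]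
  -- the anchor is a superderivation
  have hder : ∀ q : ZMod 2, ∀ α ∈ Omega1 A, α ∈ tdeg A 𝒜 q → IsSuperDer A 𝒜 q (rhom α) := by
    intro q α hα hαd i f hf g
    apply hι_inj
    have hjα : j α ∈ grade 1 q := hj_grade q α hα hαd
    have hιf : ι f ∈ grade 0 i := hιmem i f hf
    have hc : ((-1:ℝ) ^ ((((1:ℕ):ℤ) - 1) * ((0:ℕ):ℤ)) * (-1:ℝ) ^ (q.val * i.val)) = sgn q i := by
      norm_num [sgn]
    have key : ∀ t : ZMod 2, ∀ g' ∈ 𝒜 t,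
        ι (rhom α (f * g')) = ι (rhom α f * g' + sgn q i • (f * rhom α g')) := by
      intro t g' hg'
      rw [hrhoj α hα (f * g'), map_mul,
        hgb_leib 1 0 0 q i t (j α) hjα (ι f) hιf (ι g') (hιmem t g' hg'), hc,
        map_add, map_mul, map_smul, map_mul, hrhoj α hα f, hrhoj α hα g']
    have hL : ι (rhom α (f * g)) =
        ι (rhom α (f * pj A 𝒜 0 g)) + ι (rhom α (f * pj A 𝒜 1 g)) := by
      conv_lhs => rw [← pj_sum A 𝒜 g]
      rw [mul_add, map_add, map_add]
    rw [hL, key 0 _ (pj_mem A 𝒜 0 g), key 1 _ (pj_mem A 𝒜 1 g), ← map_add]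
    congr 1
    conv_rhs => rw [← pj_sum A 𝒜 g]
    rw [mul_add (rhom α f), map_add (rhom α), mul_add f, smul_add]
    abel
  -- skew symmetry
  have hskew : ∀ i k : ZMod 2, ∀ α ∈ Omega1 A, ∀ β ∈ Omega1 A,
      α ∈ tdeg A 𝒜 i → β ∈ tdeg A 𝒜 k → brm α β = -(sgn i k • brm β α) := by
    intro i k α hα β hβ hαt hβt
    have hmemR : sgn i k • brm β α ∈ Omega1 A := hsmul_mem _ (hbm β α) _
    apply hj_inj _ (hbm α β) _ (neg_mem hmemR)
    rw [hbrj α hα β hβ, hj_negsmul _ (hbm β α) _, hbrj β hβ α hα]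
    have hc : ((-1:ℝ) ^ ((((1:ℕ):ℤ) - 1) * (((1:ℕ):ℤ) - 1)) * (-1:ℝ) ^ (i.val * k.val))
        = sgn i k := by norm_num [sgn]
    rw [hgb_skew 1 1 i k (j α) (hj_grade i α hα hαt) (j β) (hj_grade k β hβ hβt), hc]
  -- Jacobi identity
  have hjac : ∀ i k m : ZMod 2, ∀ α ∈ Omega1 A, ∀ β ∈ Omega1 A, ∀ γ ∈ Omega1 A,
      α ∈ tdeg A 𝒜 i → β ∈ tdeg A 𝒜 k → γ ∈ tdeg A 𝒜 m →
      brm α (brm β γ) = brm (brm α β) γ + sgn i k • brm β (brm α γ) := by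
    intro i k m α hα β hβ γ hγ hαt hβt hγt
    apply hj_inj _ (hbm _ _) _ (add_mem (hbm _ _) (hsmul_mem _ (hbm _ _) _))
    rw [hbrj _ hα _ (hbm β γ), hbrj _ hβ _ hγ,
      hj_lin _ (hbm _ _) _ (hbm _ _) _,
      hbrj _ (hbm α β) _ hγ, hbrj _ hα _ hβ, hbrj _ hβ _ (hbm α γ), hbrj _ hα _ hγ]
    have hc : ((-1:ℝ) ^ ((((1:ℕ):ℤ) - 1) * (((1:ℕ):ℤ) - 1)) * (-1:ℝ) ^ (i.val * k.val))
        = sgn i k := by norm_num [sgn]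
    rw [hgb_jac 1 1 1 i k m (j α) (hj_grade i α hα hαt) (j β) (hj_grade k β hβ hβt)
      (j γ) (hj_grade m γ hγ hγt), hc]
  -- Leibniz rule
  have hleib : ∀ i k m : ZMod 2, ∀ α ∈ Omega1 A, α ∈ tdeg A 𝒜 i → ∀ f ∈ 𝒜 k,
      ∀ β ∈ Omega1 A, β ∈ tdeg A 𝒜 m →
      brm α (f • β) = (rhom α f) • β + sgn i k • (f • brm α β) := by
    intro i k m α hα hαt f hf β hβ hβt
    have h1 : f • β ∈ Omega1 A := Submodule.smul_mem _ f hβ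
    have h2 : (rhom α f) • β ∈ Omega1 A := Submodule.smul_mem _ _ hβ
    have h3 : f • brm α β ∈ Omega1 A := Submodule.smul_mem _ f (hbm α β)
    apply hj_inj _ (hbm _ _) _ (add_mem h2 (hsmul_mem _ h3 _))
    rw [hbrj _ hα _ h1, hj_smul f β hβ, hj_lin _ h2 _ h3 _, hj_smul _ β hβ,
      hj_smul f _ (hbm α β), hbrj α hα β hβ, hrhoj α hα f]
    have hc : ((-1:ℝ) ^ ((((1:ℕ):ℤ) - 1) * ((0:ℕ):ℤ)) * (-1:ℝ) ^ (i.val * k.val))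
        = sgn i k := by norm_num [sgn]
    rw [hgb_leib 1 0 1 i k m (j α) (hj_grade i α hα hαt) (ι f) (hιmem k f hf)
      (j β) (hj_grade m β hβ hβt), hc]
  exact ⟨⟨rhom, brm, fun α _ β _ => hbm α β, hAlin, hder, hskew, hjac, hleib⟩, hbrj, hrhoj, hder⟩


end SuperPoisson
end

section
/- Let A be a graded-commutative real algebra and let [·,·] be a differential Gerstenhaber superalgebra bracket on Ω(A). Then the bracket {f, g} := [f, d g] on A makes A a Poisson superalgebra; that is, for homogeneous f, g, h ∈ A: {f,g} = −(−1)^(p(f)p(g)) {g,f}; {f,{g,h}} = {{f,g},h} + (−1)^(p(f)p(g)) {g,{f,h}}; and {f, g h} = {f,g} h + (−1)^(p(f)p(g)) g {f,h}. Moreover [·,·] coincides with the bracket associated to {·,·}, i.e. it satisfies [f, g] = 0, [f, d g] = [d f, g] = {f, g}, and [d f, d g] = d{f, g} for all f, g ∈ A. -/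
open TensorProduct

/-!
On functions `x, y ∈ Ω⁰` the bracket `[x, y]` vanishes for degree reasons, so the differential
property `d[x, y] = [dx, y] − [x, dy]` says `[dx, y] = [x, dy]`; applied once more it gives
`[dx, dy] = d[x, dy]`. Hence every identity of `{x, y} := [x, dy]` is an instance of the
corresponding Gerstenhaber identity with one or two arguments replaced by their differentials,
and the `ℤ`-degree signs of those instances are all trivial. The identities are transported to
`A` along the injective, grade-preserving `ι`, first for homogeneous and then, by bilinearity,
for all elements.
-/

namespace SuperPoisson

theorem bilinear_ext_of_homogeneous {ι R M N : Type*} [DecidableEq ι] [CommSemiring R]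
    [AddCommMonoid M] [Module R M] [AddCommMonoid N] [Module R N]
    (ℳ : ι → Submodule R M) [DirectSum.Decomposition ℳ] {B C : M →ₗ[R] M →ₗ[R] N}
    (h : ∀ i k, ∀ x ∈ ℳ i, ∀ y ∈ ℳ k, B x y = C x y) : B = C :=
  DirectSum.decompose_lhom_ext ℳ fun i => LinearMap.ext fun x =>
    DirectSum.decompose_lhom_ext ℳ fun k => LinearMap.ext fun y => h i k x x.2 y y.2

section GerstenhaberBracket

variable {Ω : Type} [Ring Ω] [Algebra ℝ Ω] (grade : ℕ → ZMod 2 → Submodule ℝ Ω)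
  (dΩ : Ω →ₗ[ℝ] Ω) (gb : Ω →ₗ[ℝ] Ω →ₗ[ℝ] Ω)

def RaisesDegree : Prop :=
  ∀ (r : ℕ) (q : ZMod 2), ∀ x ∈ grade r q, dΩ x ∈ grade (r + 1) q

def SatisfiesGradedLeibniz : Prop :=
  ∀ (r : ℕ) (q : ZMod 2), ∀ x ∈ grade r q, ∀ y : Ω,
    dΩ (x * y) = dΩ x * y + ((-1 : ℝ) ^ r) • (x * dΩ y)

def HasDegreeNegOne : Prop :=
  ∀ (r s : ℕ) (q t : ZMod 2), ∀ x ∈ grade r q, ∀ y ∈ grade s t,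
    (∀ u : ℕ, (u : ℤ) = (r : ℤ) + (s : ℤ) - 1 → gb x y ∈ grade u (q + t)) ∧
    ((r : ℤ) + (s : ℤ) - 1 < 0 → gb x y = 0)

def IsSuperSkew : Prop :=
  ∀ (r s : ℕ) (q t : ZMod 2), ∀ x ∈ grade r q, ∀ y ∈ grade s t,
    gb x y = -((((-1 : ℝ) ^ (((r : ℤ) - 1) * ((s : ℤ) - 1))) *
      ((-1 : ℝ) ^ (q.val * t.val))) • gb y x)

def SatisfiesSuperJacobi : Prop :=
  ∀ (r s u : ℕ) (q t v : ZMod 2), ∀ x ∈ grade r q, ∀ y ∈ grade s t, ∀ z ∈ grade u v,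
    gb x (gb y z) = gb (gb x y) z +
      ((((-1 : ℝ) ^ (((r : ℤ) - 1) * ((s : ℤ) - 1))) *
        ((-1 : ℝ) ^ (q.val * t.val))) • gb y (gb x z))

def SatisfiesSuperLeibniz : Prop :=
  ∀ (r s u : ℕ) (q t v : ZMod 2), ∀ x ∈ grade r q, ∀ y ∈ grade s t, ∀ z ∈ grade u v,
    gb x (y * z) = (gb x y) * z +
      ((((-1 : ℝ) ^ (((r : ℤ) - 1) * (s : ℤ))) *
        ((-1 : ℝ) ^ (q.val * t.val))) • (y * gb x z))

def IsDifferential : Prop :=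
  ∀ (r s : ℕ) (q t : ZMod 2), ∀ x ∈ grade r q, ∀ y ∈ grade s t,
    dΩ (gb x y) = gb (dΩ x) y + ((-1 : ℝ) ^ ((r : ℤ) - 1)) • gb x (dΩ y)

variable {grade dΩ gb} {q t v : ZMod 2} {x y z : Ω}

theorem d_mem_grade_one (hd : RaisesDegree grade dΩ) (hx : x ∈ grade 0 q) :
    dΩ x ∈ grade 1 q := by
  simpa using hd 0 q x hx

theorem bracket_eq_zero_of_mem_grade_zero (hdeg : HasDegreeNegOne grade gb)
    (hx : x ∈ grade 0 q) (hy : y ∈ grade 0 t) : gb x y = 0 :=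
  (hdeg 0 0 q t x hx y hy).2 (by norm_num)

theorem bracket_d_mem_grade_zero (hd : RaisesDegree grade dΩ) (hdeg : HasDegreeNegOne grade gb)
    (hx : x ∈ grade 0 q) (hy : y ∈ grade 0 t) : gb x (dΩ y) ∈ grade 0 (q + t) :=
  (hdeg 0 1 q t x hx (dΩ y) (d_mem_grade_one hd hy)).1 0 (by norm_num)

theorem bracket_d_left (hdeg : HasDegreeNegOne grade gb) (hdiff : IsDifferential grade dΩ gb)
    (hx : x ∈ grade 0 q) (hy : y ∈ grade 0 t) : gb (dΩ x) y = gb x (dΩ y) := by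
  have h := hdiff 0 0 q t x hx y hy
  rw [bracket_eq_zero_of_mem_grade_zero hdeg hx hy, map_zero] at h
  norm_num at h
  exact add_neg_eq_zero.mp h.symm

theorem bracket_d_d (hd : RaisesDegree grade dΩ) (hd_sq : ∀ x : Ω, dΩ (dΩ x) = 0)
    (hdeg : HasDegreeNegOne grade gb) (hdiff : IsDifferential grade dΩ gb)
    (hx : x ∈ grade 0 q) (hy : y ∈ grade 0 t) :
    gb (dΩ x) (dΩ y) = dΩ (gb x (dΩ y)) := by
  have h := hdiff 1 0 q t (dΩ x) (d_mem_grade_one hd hx) y hy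
  rw [hd_sq, map_zero, LinearMap.zero_apply, zero_add, bracket_d_left hdeg hdiff hx hy] at h
  norm_num at h
  exact h.symm

theorem bracket_d_skew (hd : RaisesDegree grade dΩ) (hdeg : HasDegreeNegOne grade gb)
    (hskew : IsSuperSkew grade gb) (hdiff : IsDifferential grade dΩ gb)
    (hx : x ∈ grade 0 q) (hy : y ∈ grade 0 t) :
    gb x (dΩ y) = -(sgn q t • gb y (dΩ x)) := by
  have h := hskew 1 0 q t (dΩ x) (d_mem_grade_one hd hx) y hy
  norm_num at h
  rw [← bracket_d_left hdeg hdiff hx hy, h, sgn]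

theorem bracket_d_jacobi (hd : RaisesDegree grade dΩ) (hd_sq : ∀ x : Ω, dΩ (dΩ x) = 0)
    (hdeg : HasDegreeNegOne grade gb) (hjac : SatisfiesSuperJacobi grade gb)
    (hdiff : IsDifferential grade dΩ gb)
    (hx : x ∈ grade 0 q) (hy : y ∈ grade 0 t) (hz : z ∈ grade 0 v) :
    gb x (dΩ (gb y (dΩ z))) =
      gb (gb x (dΩ y)) (dΩ z) + sgn q t • gb y (dΩ (gb x (dΩ z))) := by
  have h := hjac 0 1 1 q t v x hx (dΩ y) (d_mem_grade_one hd hy) (dΩ z) (d_mem_grade_one hd hz)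
  norm_num at h
  rw [← bracket_d_d hd hd_sq hdeg hdiff hy hz, h,
    bracket_d_left hdeg hdiff hy (bracket_d_mem_grade_zero hd hdeg hx hz), sgn]

theorem bracket_d_leibniz (hd : RaisesDegree grade dΩ) (hd_leib : SatisfiesGradedLeibniz grade dΩ)
    (hdeg : HasDegreeNegOne grade gb) (hleib : SatisfiesSuperLeibniz grade gb)
    (hx : x ∈ grade 0 q) (hy : y ∈ grade 0 t) (hz : z ∈ grade 0 v) :
    gb x (dΩ (y * z)) = gb x (dΩ y) * z + sgn q t • (y * gb x (dΩ z)) := by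
  have h₁ := hleib 0 1 0 q t v x hx (dΩ y) (d_mem_grade_one hd hy) z hz
  have h₂ := hleib 0 0 1 q t v x hx y hy (dΩ z) (d_mem_grade_one hd hz)
  rw [bracket_eq_zero_of_mem_grade_zero hdeg hx hz, mul_zero, smul_zero, add_zero] at h₁
  rw [bracket_eq_zero_of_mem_grade_zero hdeg hx hy, zero_mul, zero_add] at h₂
  norm_num at h₂
  rw [hd_leib 0 t y hy z, pow_zero, one_smul, map_add, h₁, h₂, sgn]

end GerstenhaberBracket

theorem differential_gerstenhaber_gives_poisson_general
    (A : Type) [Ring A] [Algebra ℝ A] (𝒜 : ZMod 2 → Submodule ℝ A) [GradedAlgebra 𝒜]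
    -- A model `Ω` of the algebra `Ω(A) = ⊕_{r} (Ω¹(A))^r` of graded forms:
    (Ω : Type) [Ring Ω] [Algebra ℝ Ω]
    (grade : ℕ → ZMod 2 → Submodule ℝ Ω)
    (ι : A →ₐ[ℝ] Ω) (hι_inj : Function.Injective ι)
    (hι_grade : ∀ q : ZMod 2, Submodule.map ι.toLinearMap (𝒜 q) = grade 0 q)
    -- the exterior superderivative on the model `Ω`:
    (dΩ : Ω →ₗ[ℝ] Ω)
    (hd_grade : ∀ (r : ℕ) (q : ZMod 2), ∀ x ∈ grade r q, dΩ x ∈ grade (r + 1) q)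
    (hd_leib : ∀ (r : ℕ) (q : ZMod 2), ∀ x ∈ grade r q, ∀ y : Ω,
      dΩ (x * y) = dΩ x * y + ((-1 : ℝ) ^ r) • (x * dΩ y))
    (hd_sq : ∀ x : Ω, dΩ (dΩ x) = 0)
    -- a Gerstenhaber superalgebra bracket of ℤ-degree −1 on `Ω(A)`:
    (gb : Ω →ₗ[ℝ] Ω →ₗ[ℝ] Ω)
    (hgb_deg : ∀ (r s : ℕ) (q t : ZMod 2), ∀ x ∈ grade r q, ∀ y ∈ grade s t,
      (∀ u : ℕ, (u : ℤ) = (r : ℤ) + (s : ℤ) - 1 → gb x y ∈ grade u (q + t)) ∧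
      ((r : ℤ) + (s : ℤ) - 1 < 0 → gb x y = 0))
    (hgb_skew : ∀ (r s : ℕ) (q t : ZMod 2), ∀ x ∈ grade r q, ∀ y ∈ grade s t,
      gb x y = -((((-1 : ℝ) ^ (((r : ℤ) - 1) * ((s : ℤ) - 1))) *
        ((-1 : ℝ) ^ (q.val * t.val))) • gb y x))
    (hgb_jac : ∀ (r s u : ℕ) (q t v : ZMod 2),
      ∀ x ∈ grade r q, ∀ y ∈ grade s t, ∀ z ∈ grade u v,
      gb x (gb y z) = gb (gb x y) z +
        ((((-1 : ℝ) ^ (((r : ℤ) - 1) * ((s : ℤ) - 1))) *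
          ((-1 : ℝ) ^ (q.val * t.val))) • gb y (gb x z)))
    (hgb_leib : ∀ (r s u : ℕ) (q t v : ZMod 2),
      ∀ x ∈ grade r q, ∀ y ∈ grade s t, ∀ z ∈ grade u v,
      gb x (y * z) = (gb x y) * z +
        ((((-1 : ℝ) ^ (((r : ℤ) - 1) * (s : ℤ))) *
          ((-1 : ℝ) ^ (q.val * t.val))) • (y * gb x z)))
    -- `[·,·]` is differential:
    (hdiff : ∀ (r s : ℕ) (q t : ZMod 2), ∀ x ∈ grade r q, ∀ y ∈ grade s t,
      dΩ (gb x y) = gb (dΩ x) y + ((-1 : ℝ) ^ ((r : ℤ) - 1)) • gb x (dΩ y))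
    -- `{f, g} := [f, d g]`:
    (pb : A →ₗ[ℝ] A →ₗ[ℝ] A)
    (hpb : ∀ f g : A, ι (pb f g) = gb (ι f) (dΩ (ι g))) :
    -- `(A, {·,·})` is a Poisson superalgebra:
    (∀ i k : ZMod 2, ∀ f ∈ 𝒜 i, ∀ g ∈ 𝒜 k, pb f g ∈ 𝒜 (i + k)) ∧
    (∀ i k : ZMod 2, ∀ f ∈ 𝒜 i, ∀ g ∈ 𝒜 k, pb f g = -(sgn i k • pb g f)) ∧
    (∀ i k m : ZMod 2, ∀ f ∈ 𝒜 i, ∀ g ∈ 𝒜 k, ∀ h ∈ 𝒜 m,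
      pb f (pb g h) = pb (pb f g) h + sgn i k • pb g (pb f h)) ∧
    (∀ i k m : ZMod 2, ∀ f ∈ 𝒜 i, ∀ g ∈ 𝒜 k, ∀ h ∈ 𝒜 m,
      pb f (g * h) = pb f g * h + sgn i k • (g * pb f h)) ∧
    -- and `[·,·]` coincides with the bracket associated to `{·,·}`:
    (∀ f g : A, gb (ι f) (ι g) = 0) ∧
    (∀ f g : A, gb (dΩ (ι f)) (ι g) = ι (pb f g)) ∧
    (∀ f g : A, gb (dΩ (ι f)) (dΩ (ι g)) = dΩ (ι (pb f g))) := by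
  have hι : ∀ q, ∀ a ∈ 𝒜 q, ι a ∈ grade 0 q := fun q a ha => hι_grade q ▸ ⟨a, ha, rfl⟩
  refine ⟨fun i k f hf g hg => ?_, fun i k f hf g hg => hι_inj ?_,
    fun i k m f hf g hg h hh => hι_inj ?_, fun i k m f hf g hg h hh => hι_inj ?_,
    fun f g => LinearMap.congr_fun₂ (?_ : gb.compl₁₂ ι.toLinearMap ι.toLinearMap = 0) f g,
    fun f g => LinearMap.congr_fun₂ (?_ : gb.compl₁₂ (dΩ ∘ₗ ι.toLinearMap) ι.toLinearMap =
      pb.compr₂ ι.toLinearMap) f g,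
    fun f g => LinearMap.congr_fun₂ (?_ : gb.compl₁₂ (dΩ ∘ₗ ι.toLinearMap)
      (dΩ ∘ₗ ι.toLinearMap) = pb.compr₂ (dΩ ∘ₗ ι.toLinearMap)) f g⟩
  · obtain ⟨a, ha, hιa⟩ := hι_grade (i + k) ▸
      bracket_d_mem_grade_zero hd_grade hgb_deg (hι i f hf) (hι k g hg)
    rwa [← hι_inj (hιa.trans (hpb f g).symm)]
  · simp only [map_neg, map_smul, hpb]
    exact bracket_d_skew hd_grade hgb_deg hgb_skew hdiff (hι i f hf) (hι k g hg)
  · simp only [map_add, map_smul, hpb]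
    exact bracket_d_jacobi hd_grade hd_sq hgb_deg hgb_jac hdiff (hι i f hf) (hι k g hg)
      (hι m h hh)
  · simp only [map_add, map_mul, map_smul, hpb]
    exact bracket_d_leibniz hd_grade hd_leib hgb_deg hgb_leib (hι i f hf) (hι k g hg) (hι m h hh)
  all_goals refine bilinear_ext_of_homogeneous 𝒜 fun i k f hf g hg => ?_
  · exact bracket_eq_zero_of_mem_grade_zero hgb_deg (hι i f hf) (hι k g hg)
  · exact (bracket_d_left hgb_deg hdiff (hι i f hf) (hι k g hg)).trans (hpb f g).symm
  · exact (bracket_d_d hd_grade hd_sq hgb_deg hdiff (hι i f hf) (hι k g hg)).trans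
      (congrArg dΩ (hpb f g)).symm

/-- If `[·,·]` is a differential Gerstenhaber superalgebra
bracket on `Ω(A)`, then `{f, g} := [f, d g]` makes `A` a Poisson superalgebra,
and `[·,·]` coincides with the associated bracket on generators:
`[f,g] = 0`, `[f, d g] = [d f, g] = {f,g}`, `[d f, d g] = d{f,g}`. -/
theorem differential_gerstenhaber_gives_poisson
    (A : Type) [Ring A] [Algebra ℝ A] (𝒜 : ZMod 2 → Submodule ℝ A) [GradedAlgebra 𝒜]
    (hcomm : SuperComm A 𝒜)
    -- A model `Ω` of the algebra `Ω(A) = ⊕_{r} (Ω¹(A))^r` of graded forms: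
    (Ω : Type) [Ring Ω] [Algebra ℝ Ω]
    (grade : ℕ → ZMod 2 → Submodule ℝ Ω)
    (hdecomp : DirectSum.IsInternal (fun p : ℕ × ZMod 2 => grade p.1 p.2))
    (hone : (1 : Ω) ∈ grade 0 0)
    (hmul : ∀ (r s : ℕ) (q t : ZMod 2), ∀ x ∈ grade r q, ∀ y ∈ grade s t,
      x * y ∈ grade (r + s) (q + t))
    (hscomm : ∀ (r s : ℕ) (q t : ZMod 2), ∀ x ∈ grade r q, ∀ y ∈ grade s t,
      x * y = ((-1 : ℝ) ^ (r * s + q.val * t.val)) • (y * x))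
    (ι : A →ₐ[ℝ] Ω) (hι_inj : Function.Injective ι)
    (hι_grade : ∀ q : ZMod 2, Submodule.map ι.toLinearMap (𝒜 q) = grade 0 q)
    (j : A ⊗[ℝ] A → Ω)
    (hj_add : ∀ α ∈ Omega1 A, ∀ β ∈ Omega1 A, j (α + β) = j α + j β)
    (hj_smul : ∀ (a : A), ∀ α ∈ Omega1 A, j (a • α) = ι a * j α)
    (hj_inj : ∀ α ∈ Omega1 A, ∀ β ∈ Omega1 A, j α = j β → α = β)
    (hj_grade : ∀ q : ZMod 2, ∀ α ∈ Omega1 A, α ∈ tdeg A 𝒜 q → j α ∈ grade 1 q)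
    (hj_surj : ∀ q : ZMod 2, ∀ x ∈ grade 1 q,
      ∃ α ∈ Omega1 A, α ∈ tdeg A 𝒜 q ∧ j α = x)
    (hgen : Algebra.adjoin ℝ
      (Set.range ι ∪ j '' (Omega1 A : Set (A ⊗[ℝ] A))) = ⊤)
    -- the exterior superderivative on the model `Ω`:
    (dΩ : Ω →ₗ[ℝ] Ω)
    (hd_grade : ∀ (r : ℕ) (q : ZMod 2), ∀ x ∈ grade r q, dΩ x ∈ grade (r + 1) q)
    (hd_iota : ∀ a : A, dΩ (ι a) = j (dO A a))
    (hd_leib : ∀ (r : ℕ) (q : ZMod 2), ∀ x ∈ grade r q, ∀ y : Ω,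
      dΩ (x * y) = dΩ x * y + ((-1 : ℝ) ^ r) • (x * dΩ y))
    (hd_sq : ∀ x : Ω, dΩ (dΩ x) = 0)
    -- a Gerstenhaber superalgebra bracket of ℤ-degree −1 on `Ω(A)`:
    (gb : Ω →ₗ[ℝ] Ω →ₗ[ℝ] Ω)
    (hgb_deg : ∀ (r s : ℕ) (q t : ZMod 2), ∀ x ∈ grade r q, ∀ y ∈ grade s t,
      (∀ u : ℕ, (u : ℤ) = (r : ℤ) + (s : ℤ) - 1 → gb x y ∈ grade u (q + t)) ∧
      ((r : ℤ) + (s : ℤ) - 1 < 0 → gb x y = 0))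
    (hgb_skew : ∀ (r s : ℕ) (q t : ZMod 2), ∀ x ∈ grade r q, ∀ y ∈ grade s t,
      gb x y = -((((-1 : ℝ) ^ (((r : ℤ) - 1) * ((s : ℤ) - 1))) *
        ((-1 : ℝ) ^ (q.val * t.val))) • gb y x))
    (hgb_jac : ∀ (r s u : ℕ) (q t v : ZMod 2),
      ∀ x ∈ grade r q, ∀ y ∈ grade s t, ∀ z ∈ grade u v,
      gb x (gb y z) = gb (gb x y) z +
        ((((-1 : ℝ) ^ (((r : ℤ) - 1) * ((s : ℤ) - 1))) *
          ((-1 : ℝ) ^ (q.val * t.val))) • gb y (gb x z)))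
    (hgb_leib : ∀ (r s u : ℕ) (q t v : ZMod 2),
      ∀ x ∈ grade r q, ∀ y ∈ grade s t, ∀ z ∈ grade u v,
      gb x (y * z) = (gb x y) * z +
        ((((-1 : ℝ) ^ (((r : ℤ) - 1) * (s : ℤ))) *
          ((-1 : ℝ) ^ (q.val * t.val))) • (y * gb x z)))
    -- `[·,·]` is differential:
    (hdiff : ∀ (r s : ℕ) (q t : ZMod 2), ∀ x ∈ grade r q, ∀ y ∈ grade s t,
      dΩ (gb x y) = gb (dΩ x) y + ((-1 : ℝ) ^ ((r : ℤ) - 1)) • gb x (dΩ y))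
    -- `{f, g} := [f, d g]`:
    (pb : A →ₗ[ℝ] A →ₗ[ℝ] A)
    (hpb : ∀ f g : A, ι (pb f g) = gb (ι f) (dΩ (ι g))) :
    -- `(A, {·,·})` is a Poisson superalgebra:
    (∀ i k : ZMod 2, ∀ f ∈ 𝒜 i, ∀ g ∈ 𝒜 k, pb f g ∈ 𝒜 (i + k)) ∧
    (∀ i k : ZMod 2, ∀ f ∈ 𝒜 i, ∀ g ∈ 𝒜 k, pb f g = -(sgn i k • pb g f)) ∧
    (∀ i k m : ZMod 2, ∀ f ∈ 𝒜 i, ∀ g ∈ 𝒜 k, ∀ h ∈ 𝒜 m,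
      pb f (pb g h) = pb (pb f g) h + sgn i k • pb g (pb f h)) ∧
    (∀ i k m : ZMod 2, ∀ f ∈ 𝒜 i, ∀ g ∈ 𝒜 k, ∀ h ∈ 𝒜 m,
      pb f (g * h) = pb f g * h + sgn i k • (g * pb f h)) ∧
    -- and `[·,·]` coincides with the bracket associated to `{·,·}`:
    (∀ f g : A, gb (ι f) (ι g) = 0) ∧
    (∀ f g : A, gb (dΩ (ι f)) (ι g) = ι (pb f g)) ∧
    (∀ f g : A, gb (dΩ (ι f)) (dΩ (ι g)) = dΩ (ι (pb f g))) :=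
  differential_gerstenhaber_gives_poisson_general A 𝒜 Ω grade ι hι_inj hι_grade dΩ hd_grade hd_leib
    hd_sq gb hgb_deg hgb_skew hgb_jac hgb_leib hdiff pb hpb

end SuperPoisson
end

section
/- Let (A, {·,·}) be a Poisson superalgebra and let [·,·] be its associated bracket on Ω(A), i.e. the Gerstenhaber superalgebra bracket determined by [f, g] = 0, [f, d g] = [d f, g] = {f, g}, [d f, d g] = d{f, g} for f, g ∈ A, extended by [α, β∧γ] = [α,β]∧γ + (−1)^(p(α)p(β)) β∧[α,γ]. Then [·,·] is differential: d[α, β] = [dα, β] + (−1)^(|α|−1) [α, dβ] for all bihomogeneous α, β ∈ Ω(A). -/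
open TensorProduct

/-!
For `x` of form degree `r` put `D_r(x, y) = d[x, y] - [dx, y] - (-1)^(r-1) [x, dy]`. The Leibniz
rules of `d` and of `[·,·]` make `D` a graded derivation in `y` and graded skew-symmetric
in `(x, y)`, so the vanishing of `D` spreads from pairs of generators `f`, `d f` to all pairs:
first to (generator, monomial), then by skew-symmetry to (monomial, generator), hence to
(monomial, anything); a form of bidegree `(r, q)` is a combination of monomials of that
bidegree. On generators `D = 0` is exactly the defining relations of the associated bracket
together with `d ∘ d = 0`.
-/

lemma DirectSum.IsInternal.le_span_inter {R M ι : Type*} [Ring R] [AddCommGroup M] [Module R M]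
    [DecidableEq ι] {𝒢 : ι → Submodule R M} (h : DirectSum.IsInternal 𝒢) {s : Set M}
    (hs : Submodule.span R s = ⊤) (hhom : ∀ x ∈ s, ∃ i, x ∈ 𝒢 i) (i : ι) :
    𝒢 i ≤ Submodule.span R (s ∩ 𝒢 i) := by
  let := h.chooseDecomposition
  intro x hx
  rw [← DirectSum.decompose_of_mem_same 𝒢 hx]
  clear hx
  have hxs : x ∈ Submodule.span R s := hs ▸ Submodule.mem_top
  induction hxs using Submodule.span_induction with
  | mem y hy =>
    obtain ⟨k, hk⟩ := hhom y hy
    by_cases hki : k = i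
    · subst hki
      rw [DirectSum.decompose_of_mem_same 𝒢 hk]
      exact Submodule.subset_span ⟨hy, hk⟩
    · rw [DirectSum.decompose_of_mem_ne 𝒢 hk hki]
      exact zero_mem _
  | zero => simp
  | add y z _ _ hy hz =>
    rw [DirectSum.decompose_add, DirectSum.add_apply, Submodule.coe_add]
    exact add_mem hy hz
  | smul c y _ hy =>
    rw [DirectSum.decompose_smul, DirectSum.smul_apply, Submodule.coe_smul]
    exact Submodule.smul_mem _ c hy

namespace SuperPoisson

lemma neg_one_zpow_eq_of_even_sub {a b : ℤ} (h : Even (a - b)) :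
    (-1 : ℝ) ^ a = (-1 : ℝ) ^ b := by
  rw [← sub_add_cancel a b, zpow_add₀ (by norm_num), h.neg_one_zpow, one_mul]

section Forms

variable {Ω : Type*} [Ring Ω] [Algebra ℝ Ω] (grade : ℕ → ZMod 2 → Submodule ℝ Ω)

structure IsExteriorDerivation (d : Ω →ₗ[ℝ] Ω) : Prop where
  map_mem : ∀ (r : ℕ) (q : ZMod 2), ∀ x ∈ grade r q, d x ∈ grade (r + 1) q
  map_mul : ∀ (r : ℕ) (q : ZMod 2), ∀ x ∈ grade r q, ∀ y : Ω,
    d (x * y) = d x * y + ((-1 : ℝ) ^ r) • (x * d y)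

structure IsSkewBiderivation (gb : Ω →ₗ[ℝ] Ω →ₗ[ℝ] Ω) : Prop where
  deg : ∀ (r s : ℕ) (q t : ZMod 2), ∀ x ∈ grade r q, ∀ y ∈ grade s t,
    (∀ u : ℕ, (u : ℤ) = (r : ℤ) + (s : ℤ) - 1 → gb x y ∈ grade u (q + t)) ∧
    ((r : ℤ) + (s : ℤ) - 1 < 0 → gb x y = 0)
  skew : ∀ (r s : ℕ) (q t : ZMod 2), ∀ x ∈ grade r q, ∀ y ∈ grade s t,
    gb x y = -((((-1 : ℝ) ^ (((r : ℤ) - 1) * ((s : ℤ) - 1))) *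
      ((-1 : ℝ) ^ (q.val * t.val))) • gb y x)
  leibniz : ∀ (r s u : ℕ) (q t v : ZMod 2),
    ∀ x ∈ grade r q, ∀ y ∈ grade s t, ∀ z ∈ grade u v,
    gb x (y * z) = (gb x y) * z +
      ((((-1 : ℝ) ^ (((r : ℤ) - 1) * (s : ℤ))) *
        ((-1 : ℝ) ^ (q.val * t.val))) • (y * gb x z))

variable {grade}

lemma IsExteriorDerivation.map_one {d : Ω →ₗ[ℝ] Ω} (hd : IsExteriorDerivation grade d)
    (hone : (1 : Ω) ∈ grade 0 0) : d 1 = 0 := by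
  simpa using hd.map_mul 0 0 1 hone 1

lemma IsSkewBiderivation.apply_one {gb : Ω →ₗ[ℝ] Ω →ₗ[ℝ] Ω}
    (hgb : IsSkewBiderivation grade gb) (hone : (1 : Ω) ∈ grade 0 0)
    {r : ℕ} {q : ZMod 2} {x : Ω} (hx : x ∈ grade r q) : gb x 1 = 0 := by
  simpa using hgb.leibniz r 0 0 q 0 0 x hx 1 hone 1 hone

variable (d : Ω →ₗ[ℝ] Ω) (gb : Ω →ₗ[ℝ] Ω →ₗ[ℝ] Ω)

noncomputable def bracketDefect (r : ℕ) : Ω →ₗ[ℝ] Ω →ₗ[ℝ] Ω :=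
  gb.compr₂ d - gb ∘ₗ d - ((-1 : ℝ) ^ ((r : ℤ) - 1)) • gb.compl₂ d

variable {d gb}

lemma bracketDefect_apply (r : ℕ) (x y : Ω) :
    bracketDefect d gb r x y =
      d (gb x y) - gb (d x) y - ((-1 : ℝ) ^ ((r : ℤ) - 1)) • gb x (d y) :=
  rfl

lemma bracketDefect_eq_zero_iff (r : ℕ) (x y : Ω) :
    bracketDefect d gb r x y = 0 ↔
      d (gb x y) = gb (d x) y + ((-1 : ℝ) ^ ((r : ℤ) - 1)) • gb x (d y) := by
  rw [bracketDefect_apply, sub_sub, sub_eq_zero]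

lemma bracketDefect_swap (hd : IsExteriorDerivation grade d)
    (hgb : IsSkewBiderivation grade gb)
    {r s : ℕ} {q t : ZMod 2} {x y : Ω} (hx : x ∈ grade r q) (hy : y ∈ grade s t) :
    bracketDefect d gb r x y = -((((-1 : ℝ) ^ (((r : ℤ) - 1) * ((s : ℤ) - 1))) *
      ((-1 : ℝ) ^ (q.val * t.val))) • bracketDefect d gb s y x) := by
  rw [bracketDefect_apply, bracketDefect_apply, hgb.skew r s q t x hx y hy,
    hgb.skew (r + 1) s q t (d x) (hd.map_mem r q x hx) y hy,
    hgb.skew r (s + 1) q t x hx (d y) (hd.map_mem s t y hy)]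
  simp only [map_neg, map_smul, smul_sub, smul_smul, smul_neg, neg_sub]
  match_scalars
  all_goals simp only [← zpow_natCast (-1 : ℝ), ← zpow_add₀ (by norm_num : (-1 : ℝ) ≠ 0)]
  all_goals simp only [neg_neg, mul_one]
  all_goals
    apply neg_one_zpow_eq_of_even_sub
    rw [Int.even_iff]
    ring_nf
    omega

lemma bracketDefect_mul_right (hd : IsExteriorDerivation grade d)
    (hgb : IsSkewBiderivation grade gb)
    {r s u : ℕ} {q t v : ZMod 2} {x y z : Ω} (hx : x ∈ grade r q) (hy : y ∈ grade s t)
    (hz : z ∈ grade u v) :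
    bracketDefect d gb r x (y * z) = bracketDefect d gb r x y * z +
      ((-1 : ℝ) ^ (r * s + q.val * t.val)) • (y * bracketDefect d gb r x z) := by
  have hdx := hd.map_mem r q x hx
  have hdy := hd.map_mem s t y hy
  have hdz := hd.map_mem u v z hz
  have hd_bracket : d (gb x y * z) = d (gb x y) * z +
      ((-1 : ℝ) ^ ((r : ℤ) + s - 1)) • (gb x y * d z) := by
    rcases Nat.eq_zero_or_pos (r + s) with h0 | hpos
    · simp [(hgb.deg r s q t x hx y hy).2 (by omega)]
    · obtain ⟨w, hw⟩ : ∃ w : ℕ, (w : ℤ) = r + s - 1 := ⟨r + s - 1, by omega⟩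
      rw [hd.map_mul w _ _ ((hgb.deg r s q t x hx y hy).1 w hw), ← hw, zpow_natCast]
  rw [bracketDefect_apply, bracketDefect_apply, bracketDefect_apply,
    hgb.leibniz r s u q t v x hx y hy z hz, hd.map_mul s t y hy z,
    hgb.leibniz (r + 1) s u q t v (d x) hdx y hy z hz, map_add, map_smul, hd_bracket,
    hd.map_mul s t y hy, map_add, map_smul,
    hgb.leibniz r (s + 1) u q t v x hx (d y) hdy z hz,
    hgb.leibniz r s (u + 1) q t v x hx y hy (d z) hdz]
  simp only [sub_mul, smul_mul_assoc, mul_sub, mul_smul_comm, smul_add,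
    smul_sub, smul_smul]
  match_scalars
  all_goals simp only [← zpow_natCast (-1 : ℝ), ← zpow_add₀ (by norm_num : (-1 : ℝ) ≠ 0)]
  all_goals simp only [mul_one, sub_eq_zero, neg_inj]
  all_goals
    apply neg_one_zpow_eq_of_even_sub
    rw [Int.even_iff]
    ring_nf
    omega

lemma bracketDefect_one_right (hd : IsExteriorDerivation grade d)
    (hgb : IsSkewBiderivation grade gb) (hone : (1 : Ω) ∈ grade 0 0)
    {r : ℕ} {q : ZMod 2} {x : Ω} (hx : x ∈ grade r q) : bracketDefect d gb r x 1 = 0 := by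
  rw [bracketDefect_apply, hgb.apply_one hone hx, hgb.apply_one hone (hd.map_mem r q x hx),
    hd.map_one hone]
  simp

lemma span_closure_eq_top {L : Set Ω} (htop : Algebra.adjoin ℝ L = ⊤) :
    Submodule.span ℝ (Submonoid.closure L : Set Ω) = ⊤ := by
  rw [← Algebra.adjoin_eq_span, htop, Algebra.top_toSubmodule]

lemma exists_mem_grade_of_mem_closure (hone : (1 : Ω) ∈ grade 0 0)
    (hmul : ∀ (r s : ℕ) (q t : ZMod 2), ∀ x ∈ grade r q, ∀ y ∈ grade s t,
      x * y ∈ grade (r + s) (q + t))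
    {L : Set Ω} (hL : ∀ ℓ ∈ L, ∃ r q, ℓ ∈ grade r q) {m : Ω}
    (hm : m ∈ Submonoid.closure L) : ∃ r q, m ∈ grade r q := by
  induction hm using Submonoid.closure_induction with
  | mem ℓ hℓ => exact hL ℓ hℓ
  | one => exact ⟨0, 0, hone⟩
  | mul a b _ _ ha hb =>
    obtain ⟨r, q, ha⟩ := ha
    obtain ⟨s, t, hb⟩ := hb
    exact ⟨r + s, q + t, hmul r s q t a ha b hb⟩

lemma bracketDefect_eq_zero_of_adjoin_eq_top (hd : IsExteriorDerivation grade d)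
    (hgb : IsSkewBiderivation grade gb) (hone : (1 : Ω) ∈ grade 0 0)
    (hmul : ∀ (r s : ℕ) (q t : ZMod 2), ∀ x ∈ grade r q, ∀ y ∈ grade s t,
      x * y ∈ grade (r + s) (q + t))
    {L : Set Ω} (hL : ∀ ℓ ∈ L, ∃ r q, ℓ ∈ grade r q) (htop : Algebra.adjoin ℝ L = ⊤)
    {r : ℕ} {q : ZMod 2} {x : Ω} (hx : x ∈ grade r q)
    (hxL : ∀ ℓ ∈ L, bracketDefect d gb r x ℓ = 0) (y : Ω) : bracketDefect d gb r x y = 0 := by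
  have hclosure :
      (Submonoid.closure L : Set Ω) ⊆ LinearMap.ker (bracketDefect d gb r x) := by
    intro m hm
    induction hm using Submonoid.closure_induction with
    | mem ℓ hℓ => exact hxL ℓ hℓ
    | one => exact bracketDefect_one_right hd hgb hone hx
    | mul a b ha hb ha0 hb0 =>
      obtain ⟨s, t, ha⟩ := exists_mem_grade_of_mem_closure hone hmul hL ha
      obtain ⟨u, v, hb⟩ := exists_mem_grade_of_mem_closure hone hmul hL hb
      rw [SetLike.mem_coe, LinearMap.mem_ker, bracketDefect_mul_right hd hgb hx ha hb,
        LinearMap.mem_ker.1 ha0, LinearMap.mem_ker.1 hb0]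
      simp
  exact Submodule.span_le.2 hclosure (span_closure_eq_top htop ▸ Submodule.mem_top)

theorem bracketDefect_eq_zero_of_generators (hd : IsExteriorDerivation grade d)
    (hgb : IsSkewBiderivation grade gb)
    (hdecomp : DirectSum.IsInternal (fun p : ℕ × ZMod 2 => grade p.1 p.2))
    (hone : (1 : Ω) ∈ grade 0 0)
    (hmul : ∀ (r s : ℕ) (q t : ZMod 2), ∀ x ∈ grade r q, ∀ y ∈ grade s t,
      x * y ∈ grade (r + s) (q + t))
    {L : Set Ω} (htop : Algebra.adjoin ℝ L = ⊤)
    (hL : ∀ ℓ ∈ L, ∃ r q, ℓ ∈ grade r q ∧ ∀ ℓ' ∈ L, bracketDefect d gb r ℓ ℓ' = 0)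
    {r : ℕ} {q : ZMod 2} {x : Ω} (hx : x ∈ grade r q) (y : Ω) :
    bracketDefect d gb r x y = 0 := by
  classical
  have hLgrade : ∀ ℓ ∈ L, ∃ r q, ℓ ∈ grade r q := fun ℓ hℓ =>
    let ⟨r, q, hℓ, _⟩ := hL ℓ hℓ; ⟨r, q, hℓ⟩
  have hmonomial : ∀ m ∈ Submonoid.closure L, m ∈ grade r q →
      m ∈ LinearMap.ker (bracketDefect d gb r) := by
    intro m hm hmrq
    rw [LinearMap.mem_ker]
    ext z
    refine bracketDefect_eq_zero_of_adjoin_eq_top hd hgb hone hmul hLgrade htop hmrq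
      (fun ℓ hℓ => ?_) z
    obtain ⟨s, t, hℓst, hℓL⟩ := hL ℓ hℓ
    have hℓm : bracketDefect d gb s ℓ m = 0 :=
      bracketDefect_eq_zero_of_adjoin_eq_top hd hgb hone hmul hLgrade htop hℓst hℓL m
    rw [bracketDefect_swap hd hgb hmrq hℓst, hℓm, smul_zero, neg_zero]
  have hhom : ∀ m ∈ (Submonoid.closure L : Set Ω), ∃ p : ℕ × ZMod 2, m ∈ grade p.1 p.2 :=
    fun m hm =>
      let ⟨s, t, h⟩ := exists_mem_grade_of_mem_closure hone hmul hLgrade hm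
      ⟨(s, t), h⟩
  have hxspan := hdecomp.le_span_inter (span_closure_eq_top htop) hhom (r, q) hx
  have hxker := Submodule.span_le.2 (fun m hm => hmonomial m hm.1 hm.2) hxspan
  exact LinearMap.congr_fun (LinearMap.mem_ker.1 hxker) y

end Forms

section Kaehler

variable {A : Type} [Ring A] [Algebra ℝ A]

lemma dO_mem_tdeg (𝒜 : ZMod 2 → Submodule ℝ A) [SetLike.GradedOne 𝒜] {k : ZMod 2} {b : A}
    (hb : b ∈ 𝒜 k) : dO A b ∈ tdeg A 𝒜 k :=
  sub_mem (Submodule.subset_span ⟨k, 0, b, hb, 1, SetLike.one_mem_graded 𝒜, add_zero k, rfl⟩)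
    (Submodule.subset_span ⟨0, k, 1, SetLike.one_mem_graded 𝒜, b, hb, zero_add k, rfl⟩)

lemma tmul_eq_sub_smul_dO (a b : A) : a ⊗ₜ[ℝ] b = (a * b) ⊗ₜ[ℝ] 1 - a • dO A b := by
  rw [dO, smul_sub, TensorProduct.smul_tmul', TensorProduct.smul_tmul', smul_eq_mul,
    smul_eq_mul, mul_one, sub_sub_cancel]

lemma mem_span_smul_dO_of_mem_Omega1 {α : A ⊗[ℝ] A} (hα : α ∈ Omega1 A) :
    α ∈ Submodule.span ℝ {ω | ∃ a b : A, a • dO A b = ω} := by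
  have key : ∀ ω : A ⊗[ℝ] A, ω - (LinearMap.mul' ℝ A ω) ⊗ₜ[ℝ] 1 ∈
      Submodule.span ℝ {ω | ∃ a b : A, a • dO A b = ω} := by
    intro ω
    induction ω using TensorProduct.induction_on with
    | zero => simp
    | tmul a b =>
      rw [LinearMap.mul'_apply, tmul_eq_sub_smul_dO, sub_sub_cancel_left]
      exact neg_mem (Submodule.subset_span ⟨a, b, rfl⟩)
    | add x y hx hy =>
      rw [map_add, TensorProduct.add_tmul, add_sub_add_comm]
      exact add_mem hx hy
  simpa [show LinearMap.mul' ℝ A α = 0 from hα] using key α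

lemma image_Omega1_subset {Ω : Type*} [Ring Ω] [Algebra ℝ Ω] (ι : A →ₐ[ℝ] Ω)
    (j : A ⊗[ℝ] A → Ω)
    (hj_add : ∀ α ∈ Omega1 A, ∀ β ∈ Omega1 A, j (α + β) = j α + j β)
    (hj_smul : ∀ (a : A), ∀ α ∈ Omega1 A, j (a • α) = ι a * j α)
    {S : Subalgebra ℝ Ω} (hι : ∀ a, ι a ∈ S) (hj : ∀ b, j (dO A b) ∈ S) :
    j '' Omega1 A ⊆ S := by
  have hle : Submodule.span ℝ {ω | ∃ a b : A, a • dO A b = ω} ≤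
      (Omega1 A).restrictScalars ℝ :=
    Submodule.span_le.2 fun _ ⟨a, b, hω⟩ => hω ▸ Submodule.smul_mem _ a (dO_mem A b)
  rintro _ ⟨α, hα, rfl⟩
  have hαspan := mem_span_smul_dO_of_mem_Omega1 hα
  clear hα
  induction hαspan using Submodule.span_induction with
  | mem ω hω =>
    obtain ⟨a, b, rfl⟩ := hω
    rw [hj_smul a _ (dO_mem A b)]
    exact S.mul_mem (hι a) (hj b)
  | zero =>
    have hj0 : j 0 = 0 := by simpa using hj_add 0 (zero_mem _) 0 (zero_mem _)
    exact hj0 ▸ S.zero_mem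
  | add x y hx hy hxS hyS =>
    rw [hj_add x (hle hx) y (hle hy)]
    exact S.add_mem hxS hyS
  | smul c x hx hxS =>
    rw [← algebraMap_smul A c x, hj_smul _ x (hle hx), AlgHom.commutes, ← Algebra.smul_def]
    exact S.smul_mem hxS c

end Kaehler

section Generators

variable {A : Type} [Ring A] [Algebra ℝ A] (𝒜 : ZMod 2 → Submodule ℝ A)
  {Ω : Type*} [Ring Ω] [Algebra ℝ Ω] (ι : A →ₐ[ℝ] Ω) (j : A ⊗[ℝ] A → Ω)

def homogeneousGenerators : Set Ω :=
  {z | ∃ i, ∃ a ∈ 𝒜 i, ι a = z} ∪ {z | ∃ k, ∃ b ∈ 𝒜 k, j (dO A b) = z}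

variable {𝒜 ι j} {pb : A →ₗ[ℝ] A →ₗ[ℝ] A} {dΩ : Ω →ₗ[ℝ] Ω}
  {gb : Ω →ₗ[ℝ] Ω →ₗ[ℝ] Ω}

lemma adjoin_homogeneousGenerators_eq_top [GradedAlgebra 𝒜]
    (hj_add : ∀ α ∈ Omega1 A, ∀ β ∈ Omega1 A, j (α + β) = j α + j β)
    (hj_smul : ∀ (a : A), ∀ α ∈ Omega1 A, j (a • α) = ι a * j α)
    (hgen : Algebra.adjoin ℝ (Set.range ι ∪ j '' (Omega1 A : Set (A ⊗[ℝ] A))) = ⊤)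
    (hd_iota : ∀ a : A, dΩ (ι a) = j (dO A a)) :
    Algebra.adjoin ℝ (homogeneousGenerators 𝒜 ι j) = ⊤ := by
  classical
  have hι : ∀ a, ι a ∈ Algebra.adjoin ℝ (homogeneousGenerators 𝒜 ι j) := by
    intro a
    rw [← DirectSum.sum_support_decompose 𝒜 a, map_sum]
    exact Subalgebra.sum_mem _ fun i _ =>
      Algebra.subset_adjoin (Or.inl ⟨i, _, (DirectSum.decompose 𝒜 a i).2, rfl⟩)
  have hj : ∀ b, j (dO A b) ∈ Algebra.adjoin ℝ (homogeneousGenerators 𝒜 ι j) := by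
    intro b
    -- `j ∘ dO = dΩ ∘ ι` is additive, so it splits along the decomposition of `b`
    rw [← hd_iota, ← DirectSum.sum_support_decompose 𝒜 b, map_sum, map_sum]
    refine Subalgebra.sum_mem _ fun k _ => ?_
    rw [hd_iota]
    exact Algebra.subset_adjoin (Or.inr ⟨k, _, (DirectSum.decompose 𝒜 b k).2, rfl⟩)
  refine top_unique (hgen ▸ Algebra.adjoin_le ?_)
  rintro _ (⟨a, rfl⟩ | hz)
  · exact hι a
  · exact image_Omega1_subset ι j hj_add hj_smul hι hj hz

lemma bracketDefect_iota (hd_iota : ∀ a : A, dΩ (ι a) = j (dO A a))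
    (hd_sq : ∀ x : Ω, dΩ (dΩ x) = 0)
    (h0 : ∀ f g : A, gb (ι f) (ι g) = 0)
    (h1 : ∀ f g : A, gb (ι f) (j (dO A g)) = ι (pb f g))
    (h1' : ∀ f g : A, gb (j (dO A f)) (ι g) = ι (pb f g))
    (h2 : ∀ f g : A, gb (j (dO A f)) (j (dO A g)) = j (dO A (pb f g)))
    (f : A) {ℓ : Ω} (hℓ : ℓ ∈ homogeneousGenerators 𝒜 ι j) :
    bracketDefect dΩ gb 0 (ι f) ℓ = 0 := by
  have hdj : ∀ a, dΩ (j (dO A a)) = 0 := fun a => hd_iota a ▸ hd_sq (ι a)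
  rcases hℓ with ⟨_, g, _, rfl⟩ | ⟨_, g, _, rfl⟩
  · rw [bracketDefect_apply, h0, map_zero, hd_iota, hd_iota, h1', h1]
    norm_num
  · rw [bracketDefect_apply, h1, hd_iota, hd_iota, h2, hdj, map_zero, smul_zero, sub_self,
      sub_zero]

lemma bracketDefect_j_dO (hd_iota : ∀ a : A, dΩ (ι a) = j (dO A a))
    (hd_sq : ∀ x : Ω, dΩ (dΩ x) = 0)
    (h1' : ∀ f g : A, gb (j (dO A f)) (ι g) = ι (pb f g))
    (h2 : ∀ f g : A, gb (j (dO A f)) (j (dO A g)) = j (dO A (pb f g)))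
    (f : A) {ℓ : Ω} (hℓ : ℓ ∈ homogeneousGenerators 𝒜 ι j) :
    bracketDefect dΩ gb 1 (j (dO A f)) ℓ = 0 := by
  have hdj : ∀ a, dΩ (j (dO A a)) = 0 := fun a => hd_iota a ▸ hd_sq (ι a)
  rcases hℓ with ⟨_, g, _, rfl⟩ | ⟨_, g, _, rfl⟩
  · rw [bracketDefect_apply, h1', hd_iota, hdj, map_zero, LinearMap.zero_apply, hd_iota, h2]
    norm_num
  · rw [bracketDefect_apply, h2, hdj, hdj, hdj, map_zero, LinearMap.zero_apply, map_zero]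
    norm_num

lemma homogeneousGenerators_bracketDefect_eq_zero [SetLike.GradedOne 𝒜]
    {grade : ℕ → ZMod 2 → Submodule ℝ Ω}
    (hι_grade : ∀ q : ZMod 2, Submodule.map ι.toLinearMap (𝒜 q) = grade 0 q)
    (hj_grade : ∀ q : ZMod 2, ∀ α ∈ Omega1 A, α ∈ tdeg A 𝒜 q → j α ∈ grade 1 q)
    (hd_iota : ∀ a : A, dΩ (ι a) = j (dO A a))
    (hd_sq : ∀ x : Ω, dΩ (dΩ x) = 0)
    (h0 : ∀ f g : A, gb (ι f) (ι g) = 0)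
    (h1 : ∀ f g : A, gb (ι f) (j (dO A g)) = ι (pb f g))
    (h1' : ∀ f g : A, gb (j (dO A f)) (ι g) = ι (pb f g))
    (h2 : ∀ f g : A, gb (j (dO A f)) (j (dO A g)) = j (dO A (pb f g))) :
    ∀ ℓ ∈ homogeneousGenerators 𝒜 ι j, ∃ r q, ℓ ∈ grade r q ∧
      ∀ ℓ' ∈ homogeneousGenerators 𝒜 ι j, bracketDefect dΩ gb r ℓ ℓ' = 0 := by
  rintro _ (⟨i, f, hf, rfl⟩ | ⟨k, f, hf, rfl⟩)
  · exact ⟨0, i, hι_grade i ▸ Submodule.mem_map_of_mem hf,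
      fun _ => bracketDefect_iota hd_iota hd_sq h0 h1 h1' h2 f⟩
  · exact ⟨1, k, hj_grade k _ (dO_mem A f) (dO_mem_tdeg 𝒜 hf),
      fun _ => bracketDefect_j_dO hd_iota hd_sq h1' h2 f⟩

end Generators

theorem associated_bracket_is_differential_general
    (A : Type) [Ring A] [Algebra ℝ A] (𝒜 : ZMod 2 → Submodule ℝ A) [GradedAlgebra 𝒜]
    -- `(A, {·,·})` is a Poisson superalgebra:
    (pb : A →ₗ[ℝ] A →ₗ[ℝ] A)
    -- A model `Ω` of the algebra `Ω(A) = ⊕_{r} (Ω¹(A))^r` of graded forms: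
    (Ω : Type) [Ring Ω] [Algebra ℝ Ω]
    (grade : ℕ → ZMod 2 → Submodule ℝ Ω)
    (hdecomp : DirectSum.IsInternal (fun p : ℕ × ZMod 2 => grade p.1 p.2))
    (hone : (1 : Ω) ∈ grade 0 0)
    (hmul : ∀ (r s : ℕ) (q t : ZMod 2), ∀ x ∈ grade r q, ∀ y ∈ grade s t,
      x * y ∈ grade (r + s) (q + t))
    (ι : A →ₐ[ℝ] Ω)
    (hι_grade : ∀ q : ZMod 2, Submodule.map ι.toLinearMap (𝒜 q) = grade 0 q)
    (j : A ⊗[ℝ] A → Ω)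
    (hj_add : ∀ α ∈ Omega1 A, ∀ β ∈ Omega1 A, j (α + β) = j α + j β)
    (hj_smul : ∀ (a : A), ∀ α ∈ Omega1 A, j (a • α) = ι a * j α)
    (hj_grade : ∀ q : ZMod 2, ∀ α ∈ Omega1 A, α ∈ tdeg A 𝒜 q → j α ∈ grade 1 q)
    (hgen : Algebra.adjoin ℝ
      (Set.range ι ∪ j '' (Omega1 A : Set (A ⊗[ℝ] A))) = ⊤)
    -- the exterior superderivative on the model `Ω`:
    (dΩ : Ω →ₗ[ℝ] Ω)
    (hd_grade : ∀ (r : ℕ) (q : ZMod 2), ∀ x ∈ grade r q, dΩ x ∈ grade (r + 1) q)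
    (hd_iota : ∀ a : A, dΩ (ι a) = j (dO A a))
    (hd_leib : ∀ (r : ℕ) (q : ZMod 2), ∀ x ∈ grade r q, ∀ y : Ω,
      dΩ (x * y) = dΩ x * y + ((-1 : ℝ) ^ r) • (x * dΩ y))
    (hd_sq : ∀ x : Ω, dΩ (dΩ x) = 0)
    -- a Gerstenhaber superalgebra bracket of ℤ-degree −1 on `Ω(A)`:
    (gb : Ω →ₗ[ℝ] Ω →ₗ[ℝ] Ω)
    (hgb_deg : ∀ (r s : ℕ) (q t : ZMod 2), ∀ x ∈ grade r q, ∀ y ∈ grade s t,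
      (∀ u : ℕ, (u : ℤ) = (r : ℤ) + (s : ℤ) - 1 → gb x y ∈ grade u (q + t)) ∧
      ((r : ℤ) + (s : ℤ) - 1 < 0 → gb x y = 0))
    (hgb_skew : ∀ (r s : ℕ) (q t : ZMod 2), ∀ x ∈ grade r q, ∀ y ∈ grade s t,
      gb x y = -((((-1 : ℝ) ^ (((r : ℤ) - 1) * ((s : ℤ) - 1))) *
        ((-1 : ℝ) ^ (q.val * t.val))) • gb y x))
    (hgb_leib : ∀ (r s u : ℕ) (q t v : ZMod 2),
      ∀ x ∈ grade r q, ∀ y ∈ grade s t, ∀ z ∈ grade u v,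
      gb x (y * z) = (gb x y) * z +
        ((((-1 : ℝ) ^ (((r : ℤ) - 1) * (s : ℤ))) *
          ((-1 : ℝ) ^ (q.val * t.val))) • (y * gb x z)))
    -- `[·,·]` is the bracket associated to `{·,·}`:
    (h0 : ∀ f g : A, gb (ι f) (ι g) = 0)
    (h1 : ∀ f g : A, gb (ι f) (j (dO A g)) = ι (pb f g))
    (h1' : ∀ f g : A, gb (j (dO A f)) (ι g) = ι (pb f g))
    (h2 : ∀ f g : A, gb (j (dO A f)) (j (dO A g)) = j (dO A (pb f g))) :
    -- then `[·,·]` is differential: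
    ∀ (r s : ℕ) (q t : ZMod 2), ∀ x ∈ grade r q, ∀ y ∈ grade s t,
      dΩ (gb x y) = gb (dΩ x) y + ((-1 : ℝ) ^ ((r : ℤ) - 1)) • gb x (dΩ y) := by
  intro r _ q _ x hx y _
  rw [← bracketDefect_eq_zero_iff]
  exact bracketDefect_eq_zero_of_generators ⟨hd_grade, hd_leib⟩ ⟨hgb_deg, hgb_skew, hgb_leib⟩
    hdecomp hone hmul (adjoin_homogeneousGenerators_eq_top hj_add hj_smul hgen hd_iota)
    (homogeneousGenerators_bracketDefect_eq_zero hι_grade hj_grade hd_iota hd_sq h0 h1 h1' h2)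
    hx y

/-- Let `(A, {·,·})` be a Poisson superalgebra and let `[·,·]`
be its associated Gerstenhaber superalgebra bracket on `Ω(A)`, determined by
`[f,g] = 0`, `[f, d g] = [d f, g] = {f,g}`, `[d f, d g] = d{f,g}`. Then `[·,·]`
is differential: `d[α,β] = [dα,β] + (−1)^(|α|−1)[α,dβ]`. -/
theorem associated_bracket_is_differential
    (A : Type) [Ring A] [Algebra ℝ A] (𝒜 : ZMod 2 → Submodule ℝ A) [GradedAlgebra 𝒜]
    (hcomm : SuperComm A 𝒜)
    -- `(A, {·,·})` is a Poisson superalgebra: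
    (pb : A →ₗ[ℝ] A →ₗ[ℝ] A)
    (hpar : ∀ i k : ZMod 2, ∀ f ∈ 𝒜 i, ∀ g ∈ 𝒜 k, pb f g ∈ 𝒜 (i + k))
    (hskew : ∀ i k : ZMod 2, ∀ f ∈ 𝒜 i, ∀ g ∈ 𝒜 k, pb f g = -(sgn i k • pb g f))
    (hjac : ∀ i k m : ZMod 2, ∀ f ∈ 𝒜 i, ∀ g ∈ 𝒜 k, ∀ h ∈ 𝒜 m,
      pb f (pb g h) = pb (pb f g) h + sgn i k • pb g (pb f h))
    (hleib : ∀ i k m : ZMod 2, ∀ f ∈ 𝒜 i, ∀ g ∈ 𝒜 k, ∀ h ∈ 𝒜 m,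
      pb f (g * h) = pb f g * h + sgn i k • (g * pb f h))
    -- A model `Ω` of the algebra `Ω(A) = ⊕_{r} (Ω¹(A))^r` of graded forms:
    (Ω : Type) [Ring Ω] [Algebra ℝ Ω]
    (grade : ℕ → ZMod 2 → Submodule ℝ Ω)
    (hdecomp : DirectSum.IsInternal (fun p : ℕ × ZMod 2 => grade p.1 p.2))
    (hone : (1 : Ω) ∈ grade 0 0)
    (hmul : ∀ (r s : ℕ) (q t : ZMod 2), ∀ x ∈ grade r q, ∀ y ∈ grade s t,
      x * y ∈ grade (r + s) (q + t))
    (hscomm : ∀ (r s : ℕ) (q t : ZMod 2), ∀ x ∈ grade r q, ∀ y ∈ grade s t,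
      x * y = ((-1 : ℝ) ^ (r * s + q.val * t.val)) • (y * x))
    (ι : A →ₐ[ℝ] Ω) (hι_inj : Function.Injective ι)
    (hι_grade : ∀ q : ZMod 2, Submodule.map ι.toLinearMap (𝒜 q) = grade 0 q)
    (j : A ⊗[ℝ] A → Ω)
    (hj_add : ∀ α ∈ Omega1 A, ∀ β ∈ Omega1 A, j (α + β) = j α + j β)
    (hj_smul : ∀ (a : A), ∀ α ∈ Omega1 A, j (a • α) = ι a * j α)
    (hj_inj : ∀ α ∈ Omega1 A, ∀ β ∈ Omega1 A, j α = j β → α = β)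
    (hj_grade : ∀ q : ZMod 2, ∀ α ∈ Omega1 A, α ∈ tdeg A 𝒜 q → j α ∈ grade 1 q)
    (hj_surj : ∀ q : ZMod 2, ∀ x ∈ grade 1 q,
      ∃ α ∈ Omega1 A, α ∈ tdeg A 𝒜 q ∧ j α = x)
    (hgen : Algebra.adjoin ℝ
      (Set.range ι ∪ j '' (Omega1 A : Set (A ⊗[ℝ] A))) = ⊤)
    -- the exterior superderivative on the model `Ω`:
    (dΩ : Ω →ₗ[ℝ] Ω)
    (hd_grade : ∀ (r : ℕ) (q : ZMod 2), ∀ x ∈ grade r q, dΩ x ∈ grade (r + 1) q)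
    (hd_iota : ∀ a : A, dΩ (ι a) = j (dO A a))
    (hd_leib : ∀ (r : ℕ) (q : ZMod 2), ∀ x ∈ grade r q, ∀ y : Ω,
      dΩ (x * y) = dΩ x * y + ((-1 : ℝ) ^ r) • (x * dΩ y))
    (hd_sq : ∀ x : Ω, dΩ (dΩ x) = 0)
    -- a Gerstenhaber superalgebra bracket of ℤ-degree −1 on `Ω(A)`:
    (gb : Ω →ₗ[ℝ] Ω →ₗ[ℝ] Ω)
    (hgb_deg : ∀ (r s : ℕ) (q t : ZMod 2), ∀ x ∈ grade r q, ∀ y ∈ grade s t,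
      (∀ u : ℕ, (u : ℤ) = (r : ℤ) + (s : ℤ) - 1 → gb x y ∈ grade u (q + t)) ∧
      ((r : ℤ) + (s : ℤ) - 1 < 0 → gb x y = 0))
    (hgb_skew : ∀ (r s : ℕ) (q t : ZMod 2), ∀ x ∈ grade r q, ∀ y ∈ grade s t,
      gb x y = -((((-1 : ℝ) ^ (((r : ℤ) - 1) * ((s : ℤ) - 1))) *
        ((-1 : ℝ) ^ (q.val * t.val))) • gb y x))
    (hgb_jac : ∀ (r s u : ℕ) (q t v : ZMod 2),
      ∀ x ∈ grade r q, ∀ y ∈ grade s t, ∀ z ∈ grade u v,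
      gb x (gb y z) = gb (gb x y) z +
        ((((-1 : ℝ) ^ (((r : ℤ) - 1) * ((s : ℤ) - 1))) *
          ((-1 : ℝ) ^ (q.val * t.val))) • gb y (gb x z)))
    (hgb_leib : ∀ (r s u : ℕ) (q t v : ZMod 2),
      ∀ x ∈ grade r q, ∀ y ∈ grade s t, ∀ z ∈ grade u v,
      gb x (y * z) = (gb x y) * z +
        ((((-1 : ℝ) ^ (((r : ℤ) - 1) * (s : ℤ))) *
          ((-1 : ℝ) ^ (q.val * t.val))) • (y * gb x z)))
    -- `[·,·]` is the bracket associated to `{·,·}`: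
    (h0 : ∀ f g : A, gb (ι f) (ι g) = 0)
    (h1 : ∀ f g : A, gb (ι f) (j (dO A g)) = ι (pb f g))
    (h1' : ∀ f g : A, gb (j (dO A f)) (ι g) = ι (pb f g))
    (h2 : ∀ f g : A, gb (j (dO A f)) (j (dO A g)) = j (dO A (pb f g))) :
    -- then `[·,·]` is differential:
    ∀ (r s : ℕ) (q t : ZMod 2), ∀ x ∈ grade r q, ∀ y ∈ grade s t,
      dΩ (gb x y) = gb (dΩ x) y + ((-1 : ℝ) ^ ((r : ℤ) - 1)) • gb x (dΩ y) :=
  associated_bracket_is_differential_general A 𝒜 pb Ω grade hdecomp hone hmul ι hι_grade j hj_add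
    hj_smul hj_grade hgen dΩ hd_grade hd_iota hd_leib hd_sq gb hgb_deg hgb_skew hgb_leib h0 h1 h1'
    h2

end SuperPoisson
end

section
/- Let (Ω¹(A), ⟦·,·⟧, ρ) be a Lie superalgebroid over a graded-commutative real algebra A such that (1) ρ is skew-supersymmetric and (2) ⟦d f, d g⟧ = d(ρ(d f)(g)) for all f, g ∈ A. Then the Gerstenhaber superalgebra bracket [·,·] induced on Ω(A) by the superalgebroid (with [f,g]=0, [α,f]=ρ(α)(f), [α,β]=⟦α,β⟧ for f,g ∈ A, α,β ∈ Ω¹(A)) is differential: d[α, β] = [dα, β] + (−1)^(|α|−1) [α, dβ] for all bihomogeneous α, β ∈ Ω(A). -/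
open TensorProduct

namespace SuperPoisson

section Helpers

lemma sg_eqz {a b : ℤ} (h : Even (a - b)) : (-1:ℝ)^a = (-1)^b := by
  obtain ⟨k, hk⟩ := h
  have hab : a = b + 2*k := by omega
  rw [hab, zpow_add₀ (by norm_num : (-1:ℝ) ≠ 0), zpow_mul]
  norm_num

lemma sg_eqn {a b : ℕ} (h : a % 2 = b % 2) : (-1:ℝ)^a = (-1)^b := by
  rw [neg_one_pow_eq_pow_mod_two, h, ← neg_one_pow_eq_pow_mod_two]

lemma sg_mul (a b : ℤ) : (-1:ℝ)^a * (-1)^b = (-1)^(a+b) :=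
  (zpow_add₀ (by norm_num) a b).symm

lemma zmod_val_add (t v : ZMod 2) :
    ∃ k : ℤ, (((t+v).val : ℤ)) = t.val + v.val + 2*k := by
  rcases (by decide : ∀ t v : ZMod 2,
      (t+v).val = t.val + v.val ∨ (t+v).val + 2 = t.val + v.val) t v with h | h
  · exact ⟨0, by rw [h]; push_cast; ring⟩
  · refine ⟨-1, ?_⟩
    have := congrArg (Nat.cast : ℕ → ℤ) h
    push_cast at this
    linarith

variable (A : Type) [Ring A] [Algebra ℝ A] (𝒜 : ZMod 2 → Submodule ℝ A)

/-- `dO` as an `ℝ`-linear map. -/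
noncomputable def dOL : A →ₗ[ℝ] A ⊗[ℝ] A :=
  (TensorProduct.mk ℝ A A).flip 1 - TensorProduct.mk ℝ A A 1

lemma dOL_eq (a : A) : dOL A a = dO A a := rfl

lemma dO_tdeg_s10 (h1 : (1:A) ∈ 𝒜 0) {q : ZMod 2} {f : A} (hf : f ∈ 𝒜 q) :
    dO A f ∈ tdeg A 𝒜 q := by
  refine sub_mem (Submodule.subset_span ?_) (Submodule.subset_span ?_)
  · exact ⟨q, 0, f, hf, 1, h1, by simp, rfl⟩
  · exact ⟨0, q, 1, h1, f, hf, by simp, rfl⟩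

lemma pairD_dO (D : A →ₗ[ℝ] A) (f : A) : pairD A D (dO A f) = D f - f * D 1 := by
  simp [pairD, dO, LinearMap.mul'_apply]

lemma superDer_one {q : ZMod 2} {D : A →ₗ[ℝ] A} (h1 : (1:A) ∈ 𝒜 0)
    (hD : IsSuperDer A 𝒜 q D) : D 1 = 0 := by
  have := hD 0 1 h1 1
  have hs : sgn q 0 = 1 := by simp [sgn]
  rw [hs, one_smul, one_mul, mul_one, one_mul] at this
  exact right_eq_add.mp this

lemma rsmul_eq (c : ℝ) (α : A ⊗[ℝ] A) : c • α = (algebraMap ℝ A c) • α := by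
  rw [algebraMap_smul]

lemma smul_dO_mem (a b : A) : a • dO A b ∈ Omega1 A :=
  Submodule.smul_mem _ a (dO_mem A b)

lemma smul_dO_eq (a b : A) : a • dO A b = (a*b) ⊗ₜ[ℝ] 1 - a ⊗ₜ[ℝ] b := by
  simp [dO, smul_sub, TensorProduct.smul_tmul', smul_eq_mul]

lemma smul_dO_tdeg_s10 (h1 : (1:A) ∈ 𝒜 0) {i k : ZMod 2} {a b : A}
    (ha : a ∈ 𝒜 i) (hb : b ∈ 𝒜 k)
    (hmulA : ∀ {i k : ZMod 2} {x y : A}, x ∈ 𝒜 i → y ∈ 𝒜 k → x * y ∈ 𝒜 (i+k)) :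
    a • dO A b ∈ tdeg A 𝒜 (i+k) := by
  rw [smul_dO_eq]
  refine sub_mem (Submodule.subset_span ?_) (Submodule.subset_span ?_)
  · exact ⟨i+k, 0, a*b, hmulA ha hb, 1, h1, by simp, rfl⟩
  · exact ⟨i, k, a, ha, b, hb, rfl, rfl⟩

lemma omega1_gen [GradedAlgebra 𝒜] {α : A ⊗[ℝ] A} (hα : α ∈ Omega1 A) :
    α ∈ Submodule.span ℝ
      {ω : A ⊗[ℝ] A | ∃ i k : ZMod 2, ∃ a ∈ 𝒜 i, ∃ b ∈ 𝒜 k, ω = a • dO A b} := by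
  classical
  set G : Set (A ⊗[ℝ] A) :=
    {ω : A ⊗[ℝ] A | ∃ i k : ZMod 2, ∃ a ∈ 𝒜 i, ∃ b ∈ 𝒜 k, ω = a • dO A b} with hG
  have key : ∀ a b : A, a • dO A b ∈ Submodule.span ℝ G := by
    intro a b
    have ha := DirectSum.sum_support_decompose 𝒜 a
    have hb := DirectSum.sum_support_decompose 𝒜 b
    have heq : a • dO A b = a • dOL A b := rfl
    rw [heq, ← ha, ← hb, map_sum, Finset.smul_sum]
    refine Submodule.sum_mem _ (fun k hk => ?_)
    rw [Finset.sum_smul]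
    refine Submodule.sum_mem _ (fun i hi => ?_)
    exact Submodule.subset_span
      ⟨i, k, _, SetLike.coe_mem _, _, SetLike.coe_mem _, rfl⟩
  -- the retraction
  set Φ : A ⊗[ℝ] A →ₗ[ℝ] A ⊗[ℝ] A :=
    ((TensorProduct.mk ℝ A A).flip 1).comp (LinearMap.mul' ℝ A) - LinearMap.id with hΦ
  have hΦall : ∀ ω : A ⊗[ℝ] A, Φ ω ∈ Submodule.span ℝ G := by
    intro ω
    induction ω using TensorProduct.induction_on with
    | zero => simp
    | tmul a b =>
        have : Φ (a ⊗ₜ[ℝ] b) = a • dO A b := by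
          rw [smul_dO_eq]
          simp [hΦ, LinearMap.mul'_apply]
        rw [this]; exact key a b
    | add x y hx hy => rw [map_add]; exact add_mem hx hy
  have hμ : LinearMap.mul' ℝ A α = 0 := hα
  have : Φ α = -α := by simp [hΦ, hμ]
  have : α = -(Φ α) := by rw [this, neg_neg]
  rw [this]
  exact neg_mem (hΦall α)

end Helpers

end SuperPoisson

namespace SuperPoisson

/-- The differential identity for the bracket, at `ℤ`-degree `r` of the first slot. -/
def Ident {Ω : Type} [Ring Ω] [Algebra ℝ Ω] (gb : Ω →ₗ[ℝ] Ω →ₗ[ℝ] Ω)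
    (dΩ : Ω →ₗ[ℝ] Ω) (r : ℕ) (x y : Ω) : Prop :=
  dΩ (gb x y) = gb (dΩ x) y + ((-1 : ℝ) ^ ((r : ℤ) - 1)) • gb x (dΩ y)

end SuperPoisson


namespace SuperPoisson

set_option maxHeartbeats 1000000 in
/-- If `(Ω¹(A), ⟦·,·⟧, ρ)` is a Lie superalgebroid with
skew-supersymmetric anchor and `⟦d f, d g⟧ = d(ρ(d f)(g))`, then the
Gerstenhaber superalgebra bracket induced on `Ω(A)` (with `[f,g] = 0`,
`[α,f] = ρ(α)(f)`, `[α,β] = ⟦α,β⟧`) is differential. -/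
theorem induced_gerstenhaber_is_differential
    (A : Type) [Ring A] [Algebra ℝ A] (𝒜 : ZMod 2 → Submodule ℝ A) [GradedAlgebra 𝒜]
    (hcomm : SuperComm A 𝒜)
    (L : LieSuperalgebroid A 𝒜)
    (hskL : SkewAnchor A 𝒜 L)
    (hdd : ∀ f g : A, L.br (dO A f) (dO A g) = dO A (L.rho (dO A f) g))
    -- A model `Ω` of the algebra `Ω(A) = ⊕_{r} (Ω¹(A))^r` of graded forms:
    (Ω : Type) [Ring Ω] [Algebra ℝ Ω]
    (grade : ℕ → ZMod 2 → Submodule ℝ Ω)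
    (hdecomp : DirectSum.IsInternal (fun p : ℕ × ZMod 2 => grade p.1 p.2))
    (hone : (1 : Ω) ∈ grade 0 0)
    (hmul : ∀ (r s : ℕ) (q t : ZMod 2), ∀ x ∈ grade r q, ∀ y ∈ grade s t,
      x * y ∈ grade (r + s) (q + t))
    (hscomm : ∀ (r s : ℕ) (q t : ZMod 2), ∀ x ∈ grade r q, ∀ y ∈ grade s t,
      x * y = ((-1 : ℝ) ^ (r * s + q.val * t.val)) • (y * x))
    (ι : A →ₐ[ℝ] Ω) (hι_inj : Function.Injective ι)
    (hι_grade : ∀ q : ZMod 2, Submodule.map ι.toLinearMap (𝒜 q) = grade 0 q)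
    (j : A ⊗[ℝ] A → Ω)
    (hj_add : ∀ α ∈ Omega1 A, ∀ β ∈ Omega1 A, j (α + β) = j α + j β)
    (hj_smul : ∀ (a : A), ∀ α ∈ Omega1 A, j (a • α) = ι a * j α)
    (hj_inj : ∀ α ∈ Omega1 A, ∀ β ∈ Omega1 A, j α = j β → α = β)
    (hj_grade : ∀ q : ZMod 2, ∀ α ∈ Omega1 A, α ∈ tdeg A 𝒜 q → j α ∈ grade 1 q)
    (hj_surj : ∀ q : ZMod 2, ∀ x ∈ grade 1 q,
      ∃ α ∈ Omega1 A, α ∈ tdeg A 𝒜 q ∧ j α = x)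
    (hgen : Algebra.adjoin ℝ
      (Set.range ι ∪ j '' (Omega1 A : Set (A ⊗[ℝ] A))) = ⊤)
    -- the exterior superderivative on the model `Ω`:
    (dΩ : Ω →ₗ[ℝ] Ω)
    (hd_grade : ∀ (r : ℕ) (q : ZMod 2), ∀ x ∈ grade r q, dΩ x ∈ grade (r + 1) q)
    (hd_iota : ∀ a : A, dΩ (ι a) = j (dO A a))
    (hd_leib : ∀ (r : ℕ) (q : ZMod 2), ∀ x ∈ grade r q, ∀ y : Ω,
      dΩ (x * y) = dΩ x * y + ((-1 : ℝ) ^ r) • (x * dΩ y))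
    (hd_sq : ∀ x : Ω, dΩ (dΩ x) = 0)
    -- a Gerstenhaber superalgebra bracket of ℤ-degree −1 on `Ω(A)`:
    (gb : Ω →ₗ[ℝ] Ω →ₗ[ℝ] Ω)
    (hgb_deg : ∀ (r s : ℕ) (q t : ZMod 2), ∀ x ∈ grade r q, ∀ y ∈ grade s t,
      (∀ u : ℕ, (u : ℤ) = (r : ℤ) + (s : ℤ) - 1 → gb x y ∈ grade u (q + t)) ∧
      ((r : ℤ) + (s : ℤ) - 1 < 0 → gb x y = 0))
    (hgb_skew : ∀ (r s : ℕ) (q t : ZMod 2), ∀ x ∈ grade r q, ∀ y ∈ grade s t,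
      gb x y = -((((-1 : ℝ) ^ (((r : ℤ) - 1) * ((s : ℤ) - 1))) *
        ((-1 : ℝ) ^ (q.val * t.val))) • gb y x))
    (hgb_jac : ∀ (r s u : ℕ) (q t v : ZMod 2),
      ∀ x ∈ grade r q, ∀ y ∈ grade s t, ∀ z ∈ grade u v,
      gb x (gb y z) = gb (gb x y) z +
        ((((-1 : ℝ) ^ (((r : ℤ) - 1) * ((s : ℤ) - 1))) *
          ((-1 : ℝ) ^ (q.val * t.val))) • gb y (gb x z)))
    (hgb_leib : ∀ (r s u : ℕ) (q t v : ZMod 2),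
      ∀ x ∈ grade r q, ∀ y ∈ grade s t, ∀ z ∈ grade u v,
      gb x (y * z) = (gb x y) * z +
        ((((-1 : ℝ) ^ (((r : ℤ) - 1) * (s : ℤ))) *
          ((-1 : ℝ) ^ (q.val * t.val))) • (y * gb x z)))
    -- `[·,·]` is the bracket induced by the Lie superalgebroid:
    (h0 : ∀ f g : A, gb (ι f) (ι g) = 0)
    (h1 : ∀ α ∈ Omega1 A, ∀ f : A, gb (j α) (ι f) = ι (L.rho α f))
    (h2 : ∀ α ∈ Omega1 A, ∀ β ∈ Omega1 A, gb (j α) (j β) = j (L.br α β)) :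
    -- then `[·,·]` is differential:
    ∀ (r s : ℕ) (q t : ZMod 2), ∀ x ∈ grade r q, ∀ y ∈ grade s t,
      dΩ (gb x y) = gb (dΩ x) y + ((-1 : ℝ) ^ ((r : ℤ) - 1)) • gb x (dΩ y) := by

  classical
  have h1A : (1:A) ∈ 𝒜 0 := SetLike.GradedOne.one_mem
  have hmulA : ∀ {i k : ZMod 2} {a b : A}, a ∈ 𝒜 i → b ∈ 𝒜 k → a*b ∈ 𝒜 (i+k) :=
    fun ha hb => SetLike.mul_mem_graded ha hb
  have hιg : ∀ {q : ZMod 2} {f : A}, f ∈ 𝒜 q → ι f ∈ grade 0 q := by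
    intro q f hf; rw [← hι_grade q]; exact ⟨f, hf, rfl⟩
  have hjO : ∀ {q : ZMod 2} {f : A}, f ∈ 𝒜 q → j (dO A f) ∈ grade 1 q :=
    fun hf => hj_grade _ _ (dO_mem A _) (dO_tdeg_s10 A 𝒜 h1A hf)
  have hd1 : dΩ (1:Ω) = 0 := by
    have h := hd_leib 0 0 1 hone 1
    rw [mul_one, pow_zero, one_smul, mul_one, one_mul] at h
    exact right_eq_add.mp h
  have hgbx1 : ∀ {r : ℕ} {q : ZMod 2} {x : Ω}, x ∈ grade r q → gb x 1 = 0 := by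
    intro r q x hx
    have h := hgb_leib r 0 0 q 0 0 x hx 1 hone 1 hone
    simp only [Nat.cast_zero, mul_zero, zpow_zero, ZMod.val_zero, pow_zero, one_mul,
      mul_one, one_smul] at h
    exact right_eq_add.mp h
  have hgb1x : ∀ {s : ℕ} {t : ZMod 2} {y : Ω}, y ∈ grade s t → gb 1 y = 0 := by
    intro s t y hy
    have h := hgb_skew 0 s 0 t 1 hone y hy
    rw [h, hgbx1 hy, smul_zero, neg_zero]
  have hρ1 : ∀ {q : ZMod 2} {f : A}, f ∈ 𝒜 q → L.rho (dO A f) 1 = 0 :=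
    fun hf => superDer_one A 𝒜 h1A (L.rho_der _ _ (dO_mem A _) (dO_tdeg_s10 A 𝒜 h1A hf))
  have hpair : ∀ {q : ZMod 2} {f : A}, f ∈ 𝒜 q → ∀ {t : ZMod 2} {g : A}, g ∈ 𝒜 t →
      pairD A (L.rho (dO A g)) (dO A f) = L.rho (dO A g) f := by
    intro q f hf t g hg
    rw [pairD_dO, hρ1 hg, mul_zero, sub_zero]
  have hsk : ∀ {q t : ZMod 2} {f g : A}, f ∈ 𝒜 q → g ∈ 𝒜 t →
      L.rho (dO A g) f = -((sgn q t) • (L.rho (dO A f) g)) := by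
    intro q t f g hf hg
    have h := hskL q t (dO A f) (dO_mem A f) (dO A g) (dO_mem A g)
      (dO_tdeg_s10 A 𝒜 h1A hf) (dO_tdeg_s10 A 𝒜 h1A hg)
    rwa [hpair hf hg, hpair hg hf] at h
  -- base cases of the induction
  have hsgn2 : ∀ (q t : ZMod 2), sgn q t * sgn q t = 1 := by
    intro q t; rw [sgn, ← mul_pow]; norm_num
  have hdj : ∀ g : A, dΩ (j (dO A g)) = 0 := by
    intro g; rw [← hd_iota g, hd_sq]
  have ib1 : ∀ {q t : ZMod 2} {f g : A}, f ∈ 𝒜 q → g ∈ 𝒜 t →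
      Ident gb dΩ 0 (ι f) (ι g) := by
    intro q t f g hf hg
    unfold Ident
    rw [h0 f g, map_zero, hd_iota f, hd_iota g, h1 (dO A f) (dO_mem A f) g,
      hgb_skew 0 1 q t (ι f) (hιg hf) (j (dO A g)) (hjO hg),
      h1 (dO A g) (dO_mem A g) f, hsk hf hg, map_neg, map_smul]
    match_scalars
    simp only [sgn, Nat.cast_zero, Nat.cast_one]
    norm_num
    rw [← mul_pow]
    norm_num
  have ib2 : ∀ {q t : ZMod 2} {f g : A}, f ∈ 𝒜 q → g ∈ 𝒜 t →
      Ident gb dΩ 0 (ι f) (j (dO A g)) := by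
    intro q t f g hf hg
    unfold Ident
    rw [hdj g, map_zero, smul_zero, add_zero, hd_iota f,
      h2 (dO A f) (dO_mem A f) (dO A g) (dO_mem A g), hdd f g,
      hgb_skew 0 1 q t (ι f) (hιg hf) (j (dO A g)) (hjO hg),
      h1 (dO A g) (dO_mem A g) f, hsk hf hg, map_neg, map_smul]
    rw [← hd_iota]
    simp only [map_neg, map_smul, smul_neg, neg_neg, smul_smul]
    rw [hd_iota]
    have hc : (-1:ℝ) ^ ((((0:ℕ):ℤ) - 1) * (((1:ℕ):ℤ) - 1)) * (-1) ^ (q.val * t.val) *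
        sgn q t = 1 := by
      simp only [sgn, Nat.cast_zero, Nat.cast_one]
      norm_num
      rw [← mul_pow]
      norm_num
    rw [hc, one_smul]
  have ib3 : ∀ {q t : ZMod 2} {f g : A}, f ∈ 𝒜 q → g ∈ 𝒜 t →
      Ident gb dΩ 1 (j (dO A f)) (ι g) := by
    intro q t f g hf hg
    unfold Ident
    rw [hdj f, map_zero, LinearMap.zero_apply, zero_add,
      h1 (dO A f) (dO_mem A f) g, hd_iota g,
      h2 (dO A f) (dO_mem A f) (dO A g) (dO_mem A g), hdd f g, hd_iota]
    norm_num
  have ib4 : ∀ {q t : ZMod 2} {f g : A}, f ∈ 𝒜 q → g ∈ 𝒜 t →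
      Ident gb dΩ 1 (j (dO A f)) (j (dO A g)) := by
    intro q t f g hf hg
    unfold Ident
    rw [h2 (dO A f) (dO_mem A f) (dO A g) (dO_mem A g), hdd f g, ← hd_iota, hd_sq,
      hdj f, hdj g, map_zero, LinearMap.zero_apply, map_zero, smul_zero, add_zero]
  have iby1 : ∀ (r : ℕ) (q : ZMod 2) (x : Ω), x ∈ grade r q → Ident gb dΩ r x 1 := by
    intro r q x hx
    unfold Ident
    rw [hgbx1 hx, hd1, map_zero, map_zero, hgbx1 (hd_grade r q x hx), smul_zero, add_zero]
  have ibx1 : ∀ (s : ℕ) (t : ZMod 2) (y : Ω), y ∈ grade s t → Ident gb dΩ 0 1 y := by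
    intro s t y hy
    unfold Ident
    rw [hgb1x hy, map_zero, hd1, map_zero, LinearMap.zero_apply,
      hgb1x (hd_grade s t y hy), smul_zero, add_zero]
  have ib0 : ∀ (r : ℕ) (y : Ω), Ident gb dΩ r 0 y := by
    intro r y; unfold Ident; simp
  -- grading of brackets
  have gbg : ∀ (r s : ℕ) (q t : ZMod 2) (x y : Ω), x ∈ grade r q → y ∈ grade s t →
      gb x y ∈ grade (r + s - 1) (q + t) := by
    intro r s q t x y hx hy
    rcases Nat.eq_zero_or_pos (r + s) with h0' | hpos
    · have hz := (hgb_deg r s q t x hx y hy).2 (by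
        have hr : r = 0 := by omega
        have hs : s = 0 := by omega
        rw [hr, hs]; norm_num)
      rw [hz]; exact Submodule.zero_mem _
    · exact (hgb_deg r s q t x hx y hy).1 (r + s - 1) (by
        have : ((r + s - 1 : ℕ) : ℤ) = (r : ℤ) + (s : ℤ) - 1 := by
          push_cast [Nat.cast_sub (by omega : 1 ≤ r + s)]; ring
        rw [this])
  -- left Leibniz rule
  have gbL : ∀ (r s u : ℕ) (q t v : ZMod 2) (x y z : Ω), x ∈ grade r q → y ∈ grade s t →
      z ∈ grade u v →
      gb (y * z) x = (((-1:ℝ)^(((r:ℤ)-1)*(u:ℤ)) * (-1:ℝ)^((q.val * v.val : ℕ) : ℤ)) •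
        (gb y x * z)) + y * gb z x := by
    intro r s u q t v x y z hx hy hz
    obtain ⟨kq, hkq⟩ := zmod_val_add t v
    have h₁ := hgb_skew (s+u) r (t+v) q (y*z) (hmul s u t v y hy z hz) x hx
    have h₂ := hgb_leib r s u q t v x hx y hy z hz
    have h₃ := hgb_skew r s q t x hx y hy
    have h₄ := hgb_skew r u q v x hx z hz
    rw [h₃, h₄] at h₂
    rw [h₂] at h₁
    rw [h₁]
    simp only [smul_add, smul_smul, smul_neg, neg_neg, neg_smul, mul_smul_comm,
      smul_mul_assoc, neg_mul, mul_neg]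
    match_scalars
    · simp only [neg_neg, mul_one, ← zpow_natCast]
      push_cast
      rw [hkq]
      simp only [sg_mul]
      exact sg_eqz ⟨((r:ℤ)-1)*((s:ℤ)-1) + (q.val:ℤ)*(t.val:ℤ) + kq*(q.val:ℤ), by ring⟩
    · simp only [neg_neg, mul_one, ← zpow_natCast]
      push_cast
      rw [hkq]
      simp only [sg_mul]
      have hone' : (1:ℝ) = (-1:ℝ)^(0:ℤ) := by norm_num
      rw [hone']
      exact sg_eqz ⟨((r:ℤ)-1)*((s:ℤ)+(u:ℤ)-1) + (q.val:ℤ)*((t.val:ℤ)+(v.val:ℤ)) + kq*(q.val:ℤ), by ring⟩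
  -- closure of the identity under products in the second slot
  have Yprod : ∀ (r : ℕ) (q : ZMod 2) (x : Ω), x ∈ grade r q →
      ∀ (s₁ s₂ : ℕ) (t₁ t₂ : ZMod 2) (y₁ y₂ : Ω), y₁ ∈ grade s₁ t₁ → y₂ ∈ grade s₂ t₂ →
      Ident gb dΩ r x y₁ → Ident gb dΩ r x y₂ → Ident gb dΩ r x (y₁ * y₂) := by
    intro r q x hx s₁ s₂ t₁ t₂ y₁ y₂ hy₁ hy₂ I₁ I₂
    unfold Ident at I₁ I₂ ⊢
    have hdx := hd_grade r q x hx
    have hdy₁ := hd_grade s₁ t₁ y₁ hy₁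
    have hdy₂ := hd_grade s₂ t₂ y₂ hy₂
    have hA := gbg r s₁ q t₁ x y₁ hx hy₁
    rw [hgb_leib r s₁ s₂ q t₁ t₂ x hx y₁ hy₁ y₂ hy₂,
      hgb_leib (r+1) s₁ s₂ q t₁ t₂ (dΩ x) hdx y₁ hy₁ y₂ hy₂,
      hd_leib s₁ t₁ y₁ hy₁ y₂]
    simp only [map_add, map_smul]
    rw [hd_leib (r+s₁-1) (q+t₁) (gb x y₁) hA y₂,
      hd_leib s₁ t₁ y₁ hy₁ ((gb x) y₂),
      hgb_leib r (s₁+1) s₂ q t₁ t₂ x hx (dΩ y₁) hdy₁ y₂ hy₂,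
      hgb_leib r s₁ (s₂+1) q t₁ t₂ x hx y₁ hy₁ (dΩ y₂) hdy₂,
      I₁, I₂]
    have hfix : ((-1:ℝ)^(r+s₁-1:ℕ)) • (gb x y₁ * dΩ y₂) =
        ((-1:ℝ)^((r:ℤ)+(s₁:ℤ)-1)) • (gb x y₁ * dΩ y₂) := by
      rcases Nat.eq_zero_or_pos (r+s₁) with h0' | hpos
      · have hz : gb x y₁ = 0 := (hgb_deg r s₁ q t₁ x hx y₁ hy₁).2 (by
          have hr : r = 0 := by omega
          have hs : s₁ = 0 := by omega
          rw [hr, hs]; norm_num)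
        rw [hz, zero_mul, smul_zero, smul_zero]
      · congr 1
        rw [← zpow_natCast]
        congr 1
        omega
    rw [hfix]
    simp only [smul_add, smul_smul, mul_add, add_mul, smul_mul_assoc, mul_smul_comm]
    match_scalars
    · norm_num
    · norm_num
    · simp only [mul_one, ← zpow_natCast]; push_cast; simp only [sg_mul]
      exact sg_eqz ⟨0, by ring⟩
    · simp only [mul_one, ← zpow_natCast]; push_cast; simp only [sg_mul]
      exact sg_eqz ⟨1-(r:ℤ), by ring⟩
    · simp only [mul_one, ← zpow_natCast]; push_cast; simp only [sg_mul]
      exact sg_eqz ⟨0, by ring⟩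
    · simp only [mul_one, ← zpow_natCast]; push_cast; simp only [sg_mul]
      exact sg_eqz ⟨0, by ring⟩
  -- closure of the identity under products in the first slot
  have Xprod : ∀ (r₁ r₂ : ℕ) (q₁ q₂ : ZMod 2) (x₁ x₂ : Ω), x₁ ∈ grade r₁ q₁ →
      x₂ ∈ grade r₂ q₂ → (∀ y, Ident gb dΩ r₁ x₁ y) → (∀ y, Ident gb dΩ r₂ x₂ y) →
      ∀ (s : ℕ) (t : ZMod 2) (y : Ω), y ∈ grade s t →
      Ident gb dΩ (r₁ + r₂) (x₁ * x₂) y := by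
    intro r₁ r₂ q₁ q₂ x₁ x₂ hx₁ hx₂ I₁ I₂ s t y hy
    unfold Ident at I₁ I₂ ⊢
    have hdx₁ := hd_grade r₁ q₁ x₁ hx₁
    have hdx₂ := hd_grade r₂ q₂ x₂ hx₂
    have hdy := hd_grade s t y hy
    have hA := gbg r₁ s q₁ t x₁ y hx₁ hy
    rw [gbL s r₁ r₂ t q₁ q₂ y x₁ x₂ hy hx₁ hx₂,
      hd_leib r₁ q₁ x₁ hx₁ x₂,
      gbL (s+1) r₁ r₂ t q₁ q₂ (dΩ y) x₁ x₂ hdy hx₁ hx₂]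
    simp only [map_add, map_smul, LinearMap.add_apply, LinearMap.smul_apply]
    rw [gbL s (r₁+1) r₂ t q₁ q₂ y (dΩ x₁) x₂ hy hdx₁ hx₂,
      gbL s r₁ (r₂+1) t q₁ q₂ y x₁ (dΩ x₂) hy hx₁ hdx₂,
      hd_leib (r₁+s-1) (q₁+t) (gb x₁ y) hA x₂,
      hd_leib r₁ q₁ x₁ hx₁ ((gb x₂) y),
      I₁ y, I₂ y]
    have hfix : ((-1:ℝ)^(r₁+s-1:ℕ)) • (gb x₁ y * dΩ x₂) =
        ((-1:ℝ)^((r₁:ℤ)+(s:ℤ)-1)) • (gb x₁ y * dΩ x₂) := by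
      rcases Nat.eq_zero_or_pos (r₁+s) with h0' | hpos
      · have hz : gb x₁ y = 0 := (hgb_deg r₁ s q₁ t x₁ hx₁ y hy).2 (by
          have hr : r₁ = 0 := by omega
          have hs : s = 0 := by omega
          rw [hr, hs]; norm_num)
        rw [hz, zero_mul, smul_zero, smul_zero]
      · congr 1
        rw [← zpow_natCast]
        congr 1
        omega
    rw [hfix]
    simp only [smul_add, smul_smul, mul_add, add_mul, smul_mul_assoc, mul_smul_comm]
    match_scalars
    · norm_num
    · simp only [mul_one, ← zpow_natCast]; push_cast; simp only [sg_mul]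
      exact sg_eqz ⟨-(r₂:ℤ), by ring⟩
    · simp only [mul_one, ← zpow_natCast]; push_cast; simp only [sg_mul]
      exact sg_eqz ⟨0, by ring⟩
    · norm_num
    · norm_num
    · simp only [mul_one, ← zpow_natCast]; push_cast; simp only [sg_mul]
      exact sg_eqz ⟨0, by ring⟩
  -- the generators
  set S : Set Ω := {x | ∃ (qq : ZMod 2) (a : A), a ∈ 𝒜 qq ∧ x = ι a} ∪
      {x | ∃ (qq : ZMod 2) (b : A), b ∈ 𝒜 qq ∧ x = j (dO A b)} with hS
  have hj0 : j 0 = 0 := by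
    have h := hj_smul 0 0 (Submodule.zero_mem _)
    rw [smul_zero, map_zero, zero_mul] at h
    exact h
  have hadj : Algebra.adjoin ℝ S = ⊤ := by
    rw [eq_top_iff, ← hgen]
    apply Algebra.adjoin_le
    intro z hz
    rcases hz with ⟨a, rfl⟩ | ⟨α, hα, rfl⟩
    · have ha := DirectSum.sum_support_decompose 𝒜 a
      have : ι a = ∑ i ∈ DFinsupp.support ((DirectSum.decompose 𝒜) a),
          ι (((DirectSum.decompose 𝒜) a) i) := by rw [← map_sum, ha]
      rw [this]
      exact Subalgebra.sum_mem _ (fun i _ =>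
        Algebra.subset_adjoin (Or.inl ⟨i, _, SetLike.coe_mem _, rfl⟩))
    · have hgen1 := omega1_gen A 𝒜 hα
      refine (Submodule.span_induction
        (p := fun (β : A ⊗[ℝ] A) _ => β ∈ Omega1 A ∧ j β ∈ Algebra.adjoin ℝ S)
        ?_ ?_ ?_ ?_ hgen1).2
      · rintro ω ⟨i, k, a, ha, b, hb, rfl⟩
        refine ⟨smul_dO_mem A a b, ?_⟩
        rw [hj_smul a _ (dO_mem A b)]
        exact Subalgebra.mul_mem _
          (Algebra.subset_adjoin (Or.inl ⟨i, a, ha, rfl⟩))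
          (Algebra.subset_adjoin (Or.inr ⟨k, b, hb, rfl⟩))
      · exact ⟨Submodule.zero_mem _, by rw [hj0]; exact Subalgebra.zero_mem _⟩
      · rintro β γ _ _ ⟨hβ₁, hβ₂⟩ ⟨hγ₁, hγ₂⟩
        exact ⟨Submodule.add_mem _ hβ₁ hγ₁,
          by rw [hj_add β hβ₁ γ hγ₁]; exact Subalgebra.add_mem _ hβ₂ hγ₂⟩
      · rintro c β _ ⟨hβ₁, hβ₂⟩
        constructor
        · rw [rsmul_eq]; exact Submodule.smul_mem _ _ hβ₁
        · rw [rsmul_eq, hj_smul _ _ hβ₁, ι.commutes c, ← Algebra.smul_def]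
          exact Subalgebra.smul_mem _ hβ₂ c
  have hspan : ∀ x : Ω, x ∈ Submodule.span ℝ ((Submonoid.closure S : Submonoid Ω) : Set Ω) := by
    intro x
    have hsp : Submodule.span ℝ ((Submonoid.closure S : Submonoid Ω) : Set Ω) = ⊤ := by
      rw [← Algebra.adjoin_eq_span, hadj]
      rfl
    rw [hsp]
    trivial
  have hom : ∀ m ∈ Submonoid.closure S, ∃ (s : ℕ) (t : ZMod 2), m ∈ grade s t := by
    intro m hm
    induction hm using Submonoid.closure_induction with
    | one => exact ⟨0, 0, hone⟩
    | mem z hz =>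
        rcases hz with ⟨qq, a, ha, rfl⟩ | ⟨qq, b, hb, rfl⟩
        exacts [⟨0, qq, hιg ha⟩, ⟨1, qq, hjO hb⟩]
    | mul a b _ _ iha ihb =>
        obtain ⟨s₁, t₁, h₁⟩ := iha; obtain ⟨s₂, t₂, h₂⟩ := ihb
        exact ⟨s₁ + s₂, t₁ + t₂, hmul _ _ _ _ _ h₁ _ h₂⟩
  have hTker : ∀ (rr : ℕ) (x y : Ω),
      Ident gb dΩ rr x y ↔ y ∈ LinearMap.ker
        (dΩ ∘ₗ (gb x) - gb (dΩ x) - ((-1:ℝ)^((rr:ℤ)-1)) • ((gb x) ∘ₗ dΩ)) := by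
    intro rr x y
    rw [LinearMap.mem_ker, LinearMap.sub_apply, LinearMap.sub_apply, LinearMap.smul_apply,
      LinearMap.comp_apply, LinearMap.comp_apply, sub_sub, sub_eq_zero]
    rfl
  have yext : ∀ (rr : ℕ) (x : Ω), (∀ m ∈ Submonoid.closure S, Ident gb dΩ rr x m) →
      ∀ y : Ω, Ident gb dΩ rr x y := by
    intro rr x h y
    rw [hTker]
    have hle : Submodule.span ℝ ((Submonoid.closure S : Submonoid Ω) : Set Ω) ≤
        LinearMap.ker (dΩ ∘ₗ (gb x) - gb (dΩ x) - ((-1:ℝ)^((rr:ℤ)-1)) • ((gb x) ∘ₗ dΩ)) := by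
      rw [Submodule.span_le]
      intro m hm
      exact (hTker rr x m).mp (h m hm)
    exact hle (hspan y)
  have yclosure : ∀ (rr : ℕ) (qq : ZMod 2) (x : Ω), x ∈ grade rr qq →
      (∀ m ∈ S, Ident gb dΩ rr x m) →
      ∀ m ∈ Submonoid.closure S, (∃ (s : ℕ) (t : ZMod 2), m ∈ grade s t) ∧
        Ident gb dΩ rr x m := by
    intro rr qq x hx hbase m hm
    induction hm using Submonoid.closure_induction with
    | one => exact ⟨⟨0, 0, hone⟩, iby1 rr qq x hx⟩
    | mem z hz =>
        refine ⟨?_, hbase z hz⟩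
        rcases hz with ⟨q', a, ha, rfl⟩ | ⟨q', b, hb, rfl⟩
        exacts [⟨0, q', hιg ha⟩, ⟨1, q', hjO hb⟩]
    | mul a b ha hb iha ihb =>
        obtain ⟨⟨s₁, t₁, h₁⟩, hI₁⟩ := iha
        obtain ⟨⟨s₂, t₂, h₂⟩, hI₂⟩ := ihb
        exact ⟨⟨s₁ + s₂, t₁ + t₂, hmul _ _ _ _ _ h₁ _ h₂⟩,
          Yprod rr qq x hx s₁ s₂ t₁ t₂ a b h₁ h₂ hI₁ hI₂⟩
  have Main : ∀ m ∈ Submonoid.closure S,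
      ∃ (rr : ℕ) (qq : ZMod 2), m ∈ grade rr qq ∧ ∀ y : Ω, Ident gb dΩ rr m y := by
    intro m hm
    induction hm using Submonoid.closure_induction with
    | one =>
        refine ⟨0, 0, hone, yext 0 1 ?_⟩
        intro m' hm'
        obtain ⟨s', t', hg'⟩ := hom m' hm'
        exact ibx1 s' t' m' hg'
    | mem z hz =>
        rcases hz with ⟨q', a, ha, rfl⟩ | ⟨q', b, hb, rfl⟩
        · refine ⟨0, q', hιg ha, yext 0 (ι a) ?_⟩
          intro m' hm'
          refine (yclosure 0 q' (ι a) (hιg ha) ?_ m' hm').2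
          intro z hz'
          rcases hz' with ⟨t', g, hg, rfl⟩ | ⟨t', g, hg, rfl⟩
          exacts [ib1 ha hg, ib2 ha hg]
        · refine ⟨1, q', hjO hb, yext 1 (j (dO A b)) ?_⟩
          intro m' hm'
          refine (yclosure 1 q' (j (dO A b)) (hjO hb) ?_ m' hm').2
          intro z hz'
          rcases hz' with ⟨t', g, hg, rfl⟩ | ⟨t', g, hg, rfl⟩
          exacts [ib3 hb hg, ib4 hb hg]
    | mul a b ham hbm iha ihb =>
        obtain ⟨r₁, q₁, hg₁, hI₁⟩ := iha
        obtain ⟨r₂, q₂, hg₂, hI₂⟩ := ihb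
        refine ⟨r₁ + r₂, q₁ + q₂, hmul _ _ _ _ _ hg₁ _ hg₂, yext _ _ ?_⟩
        intro m' hm'
        obtain ⟨s', t', hg'⟩ := hom m' hm'
        exact Xprod r₁ r₂ q₁ q₂ a b hg₁ hg₂ hI₁ hI₂ s' t' m' hg'
  -- final assembly via the projection onto `grade r q`
  intro r s q t x hx y hy
  let Gr : ℕ × ZMod 2 → Submodule ℝ Ω := fun p => grade p.1 p.2
  have hdec : DirectSum.IsInternal Gr := hdecomp
  let e := LinearEquiv.ofBijective (DirectSum.coeLinearMap Gr) hdec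
  let π : Ω →ₗ[ℝ] Ω :=
    (Gr (r, q)).subtype ∘ₗ
      (DFinsupp.lapply (r, q) :
        (DirectSum (ℕ × ZMod 2) fun p => Gr p) →ₗ[ℝ] Gr (r, q)) ∘ₗ
      e.symm.toLinearMap
  have hπ_def : ∀ z : Ω, π z = ((e.symm z) (r, q) : Ω) := fun z => rfl
  have hπ_mem : ∀ (p : ℕ × ZMod 2) (z : Ω), z ∈ Gr p → π z = if p = (r, q) then z else 0 := by
    intro p z hz
    by_cases hp : p = (r, q)
    · subst hp
      rw [if_pos rfl, hπ_def, hdec.ofBijective_coeLinearMap_of_mem hz]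
    · rw [if_neg hp, hπ_def, hdec.ofBijective_coeLinearMap_of_mem_ne hp hz]
      rfl
  have hTker2 : ∀ (z : Ω), (∀ y' : Ω, Ident gb dΩ r z y') ↔
      z ∈ LinearMap.ker ((LinearMap.llcomp ℝ Ω Ω Ω dΩ).comp gb - (gb ∘ₗ dΩ)
        - ((-1:ℝ)^((r:ℤ)-1)) • ((LinearMap.llcomp ℝ Ω Ω Ω).flip dΩ).comp gb) := by
    intro z
    rw [LinearMap.mem_ker]
    constructor
    · intro hz
      ext y'
      have := hz y'
      unfold Ident at this
      simp only [LinearMap.sub_apply, LinearMap.smul_apply, LinearMap.comp_apply,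
        LinearMap.llcomp_apply, LinearMap.flip_apply, LinearMap.zero_apply]
      rw [this]
      abel
    · intro hz y'
      have := congrFun (congrArg (fun (f : Ω →ₗ[ℝ] Ω) => (f : Ω → Ω)) hz) y'
      simp only [LinearMap.sub_apply, LinearMap.smul_apply, LinearMap.comp_apply,
        LinearMap.llcomp_apply, LinearMap.flip_apply, LinearMap.zero_apply] at this
      unfold Ident
      rw [sub_sub, sub_eq_zero] at this
      exact this
  let V : Submodule ℝ Ω := LinearMap.ker ((LinearMap.llcomp ℝ Ω Ω Ω dΩ).comp gb - (gb ∘ₗ dΩ)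
        - ((-1:ℝ)^((r:ℤ)-1)) • ((LinearMap.llcomp ℝ Ω Ω Ω).flip dΩ).comp gb)
  have hπV : ∀ m ∈ Submonoid.closure S, π m ∈ V := by
    intro m hm
    obtain ⟨rr, qq, hg, hI⟩ := Main m hm
    rw [hπ_mem (rr, qq) m hg]
    by_cases hp : ((rr, qq) : ℕ × ZMod 2) = (r, q)
    · rw [if_pos hp, ← hTker2]
      have hrr : rr = r := congrArg Prod.fst hp
      intro y'
      have := hI y'
      rwa [hrr] at this
    · rw [if_neg hp, ← hTker2]
      intro y'; exact ib0 r y'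
  have hxV : x ∈ V := by
    have hsub : Submodule.span ℝ ((Submonoid.closure S : Submonoid Ω) : Set Ω) ≤
        V.comap π := by
      rw [Submodule.span_le]
      intro m hm
      exact hπV m hm
    have : π x ∈ V := hsub (hspan x)
    rwa [hπ_mem (r, q) x hx, if_pos rfl] at this
  exact ((hTker2 x).mpr hxV) y


end SuperPoisson
end
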